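/- arXiv:2512.00346 — 10 statements merged into one kernel-verified Lean document; each statement's English description precedes it below -/
import Mathlib

section
/- Let (Ω, 𝓕, P) be a probability space, H a random variable with H > 0 P-a.s. and E[H] < ∞, E[H^q] < ∞, E[H^{1+α}] < ∞, where q ∈ [0,1) and α ∈ (q−1, 0]. Let K ≥ 0 and let d : (0,∞) → ℝ be a measurable function with |d(z)| ≤ K(1 + z^α) for all z > 0. Let λ > 0 and set G := E[H·d(λH)] and x := G + λ^{q−1}·E[H^q]. Then |G| ≤ K(E[H] + λ^α·E[H^{1+α}]) ≤ K(E[H] + (x − G)^{α/(q−1)}·E[H]^{1−α/(q−1)}). -/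
open MeasureTheory

/-!
Integrating the growth bound `|d z| ≤ K (1 + z ^ α)` at `z = λH` against `H` gives the first
inequality. For the second, `θ = α / (q - 1) ∈ [0, 1]` writes `1 + α = θ q + (1 - θ) · 1`, so
Hölder's inequality with exponents `1/θ`, `1/(1-θ)` bounds `E[H^(1+α)]` by `E[H^q]^θ E[H]^(1-θ)`,
while `λ^α E[H^q]^θ = (λ^(q-1) E[H^q])^θ = (x - G)^θ`.
-/

section Holder

variable {α : Type*} [MeasurableSpace α] {μ : Measure α} {f g : α → ℝ}

theorem MeasureTheory.Integrable.memLp_rpow_of_nonneg (hf : Integrable f μ) (hf0 : 0 ≤ᵐ[μ] f)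
    {p : ℝ} (hp : 0 < p) : MemLp (fun a => f a ^ p) (ENNReal.ofReal p⁻¹) μ := by
  have h := (memLp_one_iff_integrable.mpr hf).norm_rpow_div (ENNReal.ofReal p)
  rw [one_div, ENNReal.toReal_ofReal hp.le, ← ENNReal.ofReal_inv_of_pos hp] at h
  refine h.ae_eq ?_
  filter_upwards [hf0] with a ha
  rw [Real.norm_of_nonneg ha]

theorem integral_rpow_mul_rpow_le_of_nonneg (hf0 : 0 ≤ᵐ[μ] f) (hg0 : 0 ≤ᵐ[μ] g)
    (hf : Integrable f μ) (hg : Integrable g μ) {p q : ℝ} (hp : 0 ≤ p) (hq : 0 ≤ q)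
    (hpq : p + q = 1) :
    ∫ a, f a ^ p * g a ^ q ∂μ ≤ (∫ a, f a ∂μ) ^ p * (∫ a, g a ∂μ) ^ q := by
  rcases hp.eq_or_lt with rfl | hp
  · simp [show q = 1 by linarith]
  rcases hq.eq_or_lt with rfl | hq
  · simp [show p = 1 by linarith]
  have hconj : p⁻¹.HolderConjugate q⁻¹ :=
    Real.holderConjugate_iff.mpr ⟨by rw [one_lt_inv₀ hp]; linarith, by simpa using hpq⟩
  have key := integral_mul_le_Lp_mul_Lq_of_nonneg hconj
    (hf0.mono fun a ha => Real.rpow_nonneg ha p) (hg0.mono fun a ha => Real.rpow_nonneg ha q)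
    (hf.memLp_rpow_of_nonneg hf0 hp) (hg.memLp_rpow_of_nonneg hg0 hq)
  have hcancel : ∀ {h : α → ℝ} {r : ℝ}, 0 ≤ᵐ[μ] h → r ≠ 0 →
      ∫ a, (h a ^ r) ^ r⁻¹ ∂μ = ∫ a, h a ∂μ := fun hh hr =>
    integral_congr_ae <| hh.mono fun a ha => Real.rpow_rpow_inv ha hr
  simpa only [hcancel hf0 hp.ne', hcancel hg0 hq.ne', one_div, inv_inv] using key

theorem integral_rpow_convexComb_le {H : α → ℝ} (hH : ∀ᵐ a ∂μ, 0 < H a) {r s : ℝ}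
    (hr : Integrable (fun a => H a ^ r) μ) (hs : Integrable (fun a => H a ^ s) μ)
    {θ : ℝ} (hθ0 : 0 ≤ θ) (hθ1 : θ ≤ 1) :
    ∫ a, H a ^ (θ * r + (1 - θ) * s) ∂μ ≤
      (∫ a, H a ^ r ∂μ) ^ θ * (∫ a, H a ^ s ∂μ) ^ (1 - θ) := by
  have h := integral_rpow_mul_rpow_le_of_nonneg
    (hH.mono fun a ha => Real.rpow_nonneg ha.le r) (hH.mono fun a ha => Real.rpow_nonneg ha.le s)
    hr hs hθ0 (sub_nonneg.mpr hθ1) (add_sub_cancel θ 1)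
  refine le_of_eq_of_le (integral_congr_ae ?_) h
  filter_upwards [hH] with a ha
  rw [← Real.rpow_mul ha.le, ← Real.rpow_mul ha.le, ← Real.rpow_add ha, mul_comm r, mul_comm s]

end Holder

theorem abs_mul_apply_mul_le {d : ℝ → ℝ} {K α : ℝ}
    (hd : ∀ z : ℝ, 0 < z → |d z| ≤ K * (1 + z ^ α)) {lam h : ℝ} (hlam : 0 < lam) (hh : 0 < h) :
    |h * d (lam * h)| ≤ K * (h + lam ^ α * h ^ (1 + α)) :=
  calc |h * d (lam * h)| = h * |d (lam * h)| := by rw [abs_mul, abs_of_pos hh]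
    _ ≤ h * (K * (1 + (lam * h) ^ α)) := by gcongr; exact hd _ (mul_pos hlam hh)
    _ = K * (h + lam ^ α * h ^ (1 + α)) := by
      rw [Real.mul_rpow hlam.le hh.le, Real.rpow_add hh, Real.rpow_one]; ring

theorem turnpike_single_horizon_bound_general
    {Ω : Type*} [MeasurableSpace Ω] (P : Measure Ω)
    (H : Ω → ℝ) (hHpos : ∀ᵐ ω ∂P, 0 < H ω)
    (q α : ℝ) (hq1 : q < 1) (hα1 : q - 1 < α) (hα2 : α ≤ 0)
    (hInt1 : Integrable H P)
    (hIntq : Integrable (fun ω => H ω ^ q) P)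
    (hIntα : Integrable (fun ω => H ω ^ (1 + α)) P)
    (K : ℝ) (hK : 0 ≤ K)
    (d : ℝ → ℝ)
    (hd : ∀ z : ℝ, 0 < z → |d z| ≤ K * (1 + z ^ α))
    (lam : ℝ) (hlam : 0 < lam)
    (G x : ℝ)
    (hG : G = ∫ ω, H ω * d (lam * H ω) ∂P)
    (hx : x = G + lam ^ (q - 1) * ∫ ω, H ω ^ q ∂P) :
    |G| ≤ K * ((∫ ω, H ω ∂P) + lam ^ α * ∫ ω, H ω ^ (1 + α) ∂P) ∧
    K * ((∫ ω, H ω ∂P) + lam ^ α * ∫ ω, H ω ^ (1 + α) ∂P) ≤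
      K * ((∫ ω, H ω ∂P) +
        (x - G) ^ (α / (q - 1)) * (∫ ω, H ω ∂P) ^ (1 - α / (q - 1))) := by
  constructor
  · have hbound : ∀ᵐ ω ∂P, ‖H ω * d (lam * H ω)‖ ≤ K * (H ω + lam ^ α * H ω ^ (1 + α)) :=
      hHpos.mono fun ω hω => abs_mul_apply_mul_le hd hlam hω
    calc |G| = ‖∫ ω, H ω * d (lam * H ω) ∂P‖ := by rw [hG, Real.norm_eq_abs]
      _ ≤ ∫ ω, K * (H ω + lam ^ α * H ω ^ (1 + α)) ∂P :=
        norm_integral_le_of_norm_le ((hInt1.add (hIntα.const_mul _)).const_mul K) hbound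
      _ = _ := by
        rw [integral_const_mul, integral_add hInt1 (hIntα.const_mul _), integral_const_mul]
  set θ := α / (q - 1)
  have hq1' : q - 1 < 0 := sub_neg.mpr hq1
  have hαθ : (q - 1) * θ = α := mul_div_cancel₀ α hq1'.ne
  have hθ0 : 0 ≤ θ := div_nonneg_of_nonpos hα2 hq1'.le
  have hθ1 : θ ≤ 1 := by rw [div_le_one_of_neg hq1']; exact hα1.le
  have hmoment : ∫ ω, H ω ^ (1 + α) ∂P ≤ (∫ ω, H ω ^ q ∂P) ^ θ * (∫ ω, H ω ∂P) ^ (1 - θ) := by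
    have h := integral_rpow_convexComb_le (s := 1) hHpos hIntq
      (by simpa only [Real.rpow_one] using hInt1) hθ0 hθ1
    rw [show θ * q + (1 - θ) * 1 = 1 + α by linear_combination hαθ] at h
    simpa only [Real.rpow_one] using h
  have hxG : (x - G) ^ θ = lam ^ α * (∫ ω, H ω ^ q ∂P) ^ θ := by
    rw [hx, add_sub_cancel_left, Real.mul_rpow (by positivity)
      (integral_nonneg_of_ae (hHpos.mono fun ω hω => Real.rpow_nonneg hω.le q)),
      ← Real.rpow_mul hlam.le, hαθ]
  rw [hxG, mul_assoc]
  gcongr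

/-- Single-horizon inequality at the heart of Proposition 3.2: with
`G = E[H·d(λH)]` and `x = G + λ^{q-1}·E[H^q]`, one has
`|G| ≤ K(E[H] + λ^α E[H^{1+α}]) ≤ K(E[H] + (x-G)^{α/(q-1)} E[H]^{1-α/(q-1)})`. -/
theorem turnpike_single_horizon_bound
    {Ω : Type*} [MeasurableSpace Ω] (P : Measure Ω) [IsProbabilityMeasure P]
    (H : Ω → ℝ) (hHmeas : Measurable H) (hHpos : ∀ᵐ ω ∂P, 0 < H ω)
    (q α : ℝ) (hq0 : 0 ≤ q) (hq1 : q < 1) (hα1 : q - 1 < α) (hα2 : α ≤ 0)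
    (hInt1 : Integrable H P)
    (hIntq : Integrable (fun ω => H ω ^ q) P)
    (hIntα : Integrable (fun ω => H ω ^ (1 + α)) P)
    (K : ℝ) (hK : 0 ≤ K)
    (d : ℝ → ℝ) (hdmeas : Measurable d)
    (hd : ∀ z : ℝ, 0 < z → |d z| ≤ K * (1 + z ^ α))
    (lam : ℝ) (hlam : 0 < lam)
    (G x : ℝ)
    (hG : G = ∫ ω, H ω * d (lam * H ω) ∂P)
    (hx : x = G + lam ^ (q - 1) * ∫ ω, H ω ^ q ∂P) :
    |G| ≤ K * ((∫ ω, H ω ∂P) + lam ^ α * ∫ ω, H ω ^ (1 + α) ∂P) ∧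
    K * ((∫ ω, H ω ∂P) + lam ^ α * ∫ ω, H ω ^ (1 + α) ∂P) ≤
      K * ((∫ ω, H ω ∂P) +
        (x - G) ^ (α / (q - 1)) * (∫ ω, H ω ∂P) ^ (1 - α / (q - 1))) :=
  turnpike_single_horizon_bound_general P H hHpos q α hq1 hα1 hα2 hInt1 hIntq hIntα K hK d hd lam
    hlam G x hG hx
end

section
/- Let (Ω, 𝓕, P) be a probability space, q ∈ [0,1), α ∈ (q−1, 0], K ≥ 0, and let d : (0,∞) → ℝ be measurable with |d(z)| ≤ K(1 + z^α) for all z > 0. Let x ∈ ℝ, let (H_T)_{T>0} be a family of random variables with H_T > 0 P-a.s., E[H_T] < ∞, E[H_T^q] < ∞, E[H_T^{1+α}] < ∞ for every T > 0, and sup_{T>0} E[H_T] < ∞, and let (λ_T)_{T>0} be positive reals such that x = E[H_T·d(λ_T H_T)] + λ_T^{q−1}·E[H_T^q] for every T > 0. Then there exists M ∈ ℝ with M ≤ x such that for every T > 0: |E[H_T·d(λ_T H_T)]| ≤ K(E[H_T] + (x − M)^{α/(q−1)}·E[H_T]^{1−α/(q−1)}). -/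
/-!
Write `D_T = E[H_T d(λ_T H_T)]` and `θ = α/(q-1) ∈ [0,1)`. The growth bound on `d` gives
`|D_T| ≤ K(E[H_T] + λ_T^α E[H_T^{1+α}])`, and since `1 + α = qθ + (1-θ)`, Hölder's inequality
with exponents `1/θ`, `1/(1-θ)` turns `λ_T^α E[H_T^{1+α}]` into at most
`(λ_T^{q-1} E[H_T^q])^θ E[H_T]^{1-θ} = (x - D_T)^θ E[H_T]^{1-θ}` by the budget constraint.
Hence `y_T = x - D_T ≥ 0` satisfies `y_T ≤ A + B y_T^θ` with `A, B` independent of `T`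
(using `sup_T E[H_T] < ∞`); as `θ < 1` this bounds `y_T` by a constant `R`, and `M = x - R`.
-/

open MeasureTheory

section
variable {Ω : Type*} [MeasurableSpace Ω] {μ : Measure Ω}

theorem memLp_rpow_ofReal_inv {u : Ω → ℝ} (hu : Integrable u μ) (hu0 : 0 ≤ᵐ[μ] u)
    {θ : ℝ} (hθ : 0 < θ) : MemLp (fun ω => u ω ^ θ) (ENNReal.ofReal θ⁻¹) μ := by
  have h := (memLp_one_iff_integrable.2 hu).norm_rpow_div (ENNReal.ofReal θ)
  rw [ENNReal.toReal_ofReal hθ.le, one_div, ← ENNReal.ofReal_inv_of_pos hθ] at h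
  exact h.ae_eq (hu0.mono fun ω h => by simp only [Real.norm_of_nonneg h])

theorem integral_rpow_mul_rpow_le {u v : Ω → ℝ} (hu : Integrable u μ) (hv : Integrable v μ)
    (hu0 : 0 ≤ᵐ[μ] u) (hv0 : 0 ≤ᵐ[μ] v) {θ : ℝ} (hθ0 : 0 ≤ θ) (hθ1 : θ ≤ 1) :
    ∫ ω, u ω ^ θ * v ω ^ (1 - θ) ∂μ ≤ (∫ ω, u ω ∂μ) ^ θ * (∫ ω, v ω ∂μ) ^ (1 - θ) := by
  rcases hθ0.eq_or_lt with rfl | hθ_pos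
  · simp
  rcases hθ1.eq_or_lt with rfl | hθ_lt
  · simp
  have hθ1' : 0 < 1 - θ := sub_pos.2 hθ_lt
  have key := integral_mul_le_Lp_mul_Lq_of_nonneg
    (Real.HolderConjugate.inv_one_sub_inv hθ_pos hθ_lt)
    (hu0.mono fun ω h => Real.rpow_nonneg h θ) (hv0.mono fun ω h => Real.rpow_nonneg h (1 - θ))
    (memLp_rpow_ofReal_inv hu hu0 hθ_pos) (memLp_rpow_ofReal_inv hv hv0 hθ1')
  have cancel : ∀ {w : Ω → ℝ} {s : ℝ}, 0 ≤ᵐ[μ] w → s ≠ 0 →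
      ∫ ω, (w ω ^ s) ^ s⁻¹ ∂μ = ∫ ω, w ω ∂μ :=
    fun hw hs => integral_congr_ae (hw.mono fun ω h => Real.rpow_rpow_inv h hs)
  rwa [cancel hu0 hθ_pos.ne', cancel hv0 hθ1'.ne', one_div, inv_inv, one_div, inv_inv] at key

theorem integral_rpow_mul_add_one_sub_le {h : Ω → ℝ} (hpos : ∀ᵐ ω ∂μ, 0 < h ω)
    (hi1 : Integrable h μ) {q : ℝ} (hiq : Integrable (fun ω => h ω ^ q) μ) {θ : ℝ}
    (hθ0 : 0 ≤ θ) (hθ1 : θ ≤ 1) :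
    ∫ ω, h ω ^ (q * θ + (1 - θ)) ∂μ ≤ (∫ ω, h ω ^ q ∂μ) ^ θ * (∫ ω, h ω ∂μ) ^ (1 - θ) :=
  calc ∫ ω, h ω ^ (q * θ + (1 - θ)) ∂μ = ∫ ω, (h ω ^ q) ^ θ * h ω ^ (1 - θ) ∂μ :=
        integral_congr_ae <| hpos.mono fun ω hω => by
          simp only [← Real.rpow_mul hω.le, ← Real.rpow_add hω]
    _ ≤ _ := integral_rpow_mul_rpow_le hiq hi1 (hpos.mono fun ω hω => Real.rpow_nonneg hω.le q)
          (hpos.mono fun ω hω => hω.le) hθ0 hθ1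

theorem abs_integral_mul_comp_le {h : Ω → ℝ} {d : ℝ → ℝ} {K α l : ℝ}
    (hd : ∀ z, 0 < z → |d z| ≤ K * (1 + z ^ α)) (hl : 0 < l) (hpos : ∀ᵐ ω ∂μ, 0 < h ω)
    (hi1 : Integrable h μ) (hiα : Integrable (fun ω => h ω ^ (1 + α)) μ) :
    |∫ ω, h ω * d (l * h ω) ∂μ| ≤ K * ((∫ ω, h ω ∂μ) + l ^ α * ∫ ω, h ω ^ (1 + α) ∂μ) := by
  have pointwise : ∀ᵐ ω ∂μ, ‖h ω * d (l * h ω)‖ ≤ K * (h ω + l ^ α * h ω ^ (1 + α)) := by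
    filter_upwards [hpos] with ω hω
    calc ‖h ω * d (l * h ω)‖ = h ω * |d (l * h ω)| := by
          rw [Real.norm_eq_abs, abs_mul, abs_of_pos hω]
      _ ≤ h ω * (K * (1 + (l * h ω) ^ α)) := by gcongr; exact hd _ (mul_pos hl hω)
      _ = K * (h ω + l ^ α * h ω ^ (1 + α)) := by
          rw [Real.mul_rpow hl.le hω.le, Real.rpow_add hω, Real.rpow_one]; ring
  have hint := (hi1.add (hiα.const_mul (l ^ α))).const_mul K
  calc |∫ ω, h ω * d (l * h ω) ∂μ| ≤ ∫ ω, K * (h ω + l ^ α * h ω ^ (1 + α)) ∂μ :=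
        norm_integral_le_of_norm_le hint pointwise
    _ = _ := by rw [integral_const_mul, integral_add hi1 (hiα.const_mul _), integral_const_mul]

theorem abs_integral_mul_comp_le_interpolated {h : Ω → ℝ} {d : ℝ → ℝ} {K q α l : ℝ}
    (hq1 : q < 1) (hα1 : q - 1 < α) (hα2 : α ≤ 0) (hK : 0 ≤ K)
    (hd : ∀ z, 0 < z → |d z| ≤ K * (1 + z ^ α)) (hl : 0 < l) (hpos : ∀ᵐ ω ∂μ, 0 < h ω)
    (hi1 : Integrable h μ) (hiq : Integrable (fun ω => h ω ^ q) μ)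
    (hiα : Integrable (fun ω => h ω ^ (1 + α)) μ) :
    |∫ ω, h ω * d (l * h ω) ∂μ| ≤ K * ((∫ ω, h ω ∂μ) +
      (l ^ (q - 1) * ∫ ω, h ω ^ q ∂μ) ^ (α / (q - 1)) * (∫ ω, h ω ∂μ) ^ (1 - α / (q - 1))) := by
  set θ := α / (q - 1)
  have hθα : (q - 1) * θ = α := mul_div_cancel₀ α (by linarith)
  have hθ0 : 0 ≤ θ := div_nonneg_of_nonpos hα2 (by linarith)
  have hθ1 : θ ≤ 1 := (div_le_one_of_neg (by linarith)).2 hα1.le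
  have hIq : 0 ≤ ∫ ω, h ω ^ q ∂μ :=
    integral_nonneg_of_ae (hpos.mono fun ω hω => Real.rpow_nonneg hω.le q)
  have hexp : 1 + α = q * θ + (1 - θ) := by linear_combination -hθα
  have interp : l ^ α * ∫ ω, h ω ^ (1 + α) ∂μ ≤
      (l ^ (q - 1) * ∫ ω, h ω ^ q ∂μ) ^ θ * (∫ ω, h ω ∂μ) ^ (1 - θ) := by
    rw [Real.mul_rpow (Real.rpow_nonneg hl.le _) hIq, ← Real.rpow_mul hl.le, hθα, mul_assoc, hexp]
    exact mul_le_mul_of_nonneg_left (integral_rpow_mul_add_one_sub_le hpos hi1 hiq hθ0 hθ1)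
      (Real.rpow_nonneg hl.le α)
  calc _ ≤ K * ((∫ ω, h ω ∂μ) + l ^ α * ∫ ω, h ω ^ (1 + α) ∂μ) :=
        abs_integral_mul_comp_le hd hl hpos hi1 hiα
    _ ≤ _ := by gcongr

end

theorem le_max_one_rpow_of_le_add_mul_rpow {y A B θ : ℝ} (hy0 : 0 ≤ y) (hθ0 : 0 ≤ θ)
    (hθ1 : θ < 1) (hA : 0 ≤ A) (hy : y ≤ A + B * y ^ θ) : y ≤ max 1 ((A + B) ^ (1 - θ)⁻¹) := by
  rcases le_or_gt y 1 with hy1 | hy1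
  · exact le_max_of_le_left hy1
  refine le_max_of_le_right ?_
  have hypos : 0 < y := by linarith
  have hyθ : 1 ≤ y ^ θ := Real.one_le_rpow hy1.le hθ0
  have hθ1' : 0 < 1 - θ := by linarith
  have h1 : y ^ (1 - θ) * y ^ θ ≤ (A + B) * y ^ θ := by
    rw [← Real.rpow_add hypos, sub_add_cancel, Real.rpow_one]; nlinarith
  calc y = (y ^ (1 - θ)) ^ (1 - θ)⁻¹ := (Real.rpow_rpow_inv hy0 hθ1'.ne').symm
    _ ≤ (A + B) ^ (1 - θ)⁻¹ := by
        gcongr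
        exact le_of_mul_le_mul_right h1 (by positivity)

theorem turnpike_uniform_d_bound_general
    {Ω : Type*} [MeasurableSpace Ω] (P : Measure Ω)
    (q α : ℝ) (hq1 : q < 1) (hα1 : q - 1 < α) (hα2 : α ≤ 0)
    (K : ℝ) (hK : 0 ≤ K)
    (d : ℝ → ℝ)
    (hd : ∀ z : ℝ, 0 < z → |d z| ≤ K * (1 + z ^ α))
    (x : ℝ)
    (H : ℝ → Ω → ℝ) (lam : ℝ → ℝ)
    (hHpos : ∀ T : ℝ, 0 < T → ∀ᵐ ω ∂P, 0 < H T ω)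
    (hInt1 : ∀ T : ℝ, 0 < T → Integrable (H T) P)
    (hIntq : ∀ T : ℝ, 0 < T → Integrable (fun ω => H T ω ^ q) P)
    (hIntα : ∀ T : ℝ, 0 < T → Integrable (fun ω => H T ω ^ (1 + α)) P)
    (hsup : ∃ Csup : ℝ, ∀ T : ℝ, 0 < T → ∫ ω, H T ω ∂P ≤ Csup)
    (hlam : ∀ T : ℝ, 0 < T → 0 < lam T)
    (hbudget : ∀ T : ℝ, 0 < T →
      x = (∫ ω, H T ω * d (lam T * H T ω) ∂P) + lam T ^ (q - 1) * ∫ ω, H T ω ^ q ∂P) :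
    ∃ M : ℝ, M ≤ x ∧ ∀ T : ℝ, 0 < T →
      |∫ ω, H T ω * d (lam T * H T ω) ∂P| ≤
        K * ((∫ ω, H T ω ∂P) +
          (x - M) ^ (α / (q - 1)) * (∫ ω, H T ω ∂P) ^ (1 - α / (q - 1))) := by
  obtain ⟨C, hC⟩ := hsup
  set θ := α / (q - 1)
  have hθ0 : 0 ≤ θ := div_nonneg_of_nonpos hα2 (by linarith)
  have hθ1 : θ < 1 := (div_lt_one_of_neg (by linarith)).2 hα1
  have hmean0 : ∀ T, 0 < T → 0 ≤ ∫ ω, H T ω ∂P := fun T hT =>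
    integral_nonneg_of_ae ((hHpos T hT).mono fun ω hω => hω.le)
  have hC0 : 0 ≤ C := (hmean0 1 one_pos).trans (hC 1 one_pos)
  have hθ1' : 0 ≤ 1 - θ := by linarith
  set R := max 1 ((|x| + K * C + K * C ^ (1 - θ)) ^ (1 - θ)⁻¹)
  refine ⟨x - R, sub_le_self x (zero_le_one.trans (le_max_left _ _)), fun T hT => ?_⟩
  rw [sub_sub_cancel]
  set D := ∫ ω, H T ω * d (lam T * H T ω) ∂P
  have hy : lam T ^ (q - 1) * ∫ ω, H T ω ^ q ∂P = x - D := by linarith [hbudget T hT]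
  have hD := abs_integral_mul_comp_le_interpolated hq1 hα1 hα2 hK hd (hlam T hT) (hHpos T hT)
    (hInt1 T hT) (hIntq T hT) (hIntα T hT)
  rw [hy] at hD
  have hmean0T := hmean0 T hT
  have hy0 : 0 ≤ x - D := hy ▸ mul_nonneg (Real.rpow_nonneg (hlam T hT).le _)
    (integral_nonneg_of_ae ((hHpos T hT).mono fun ω hω => Real.rpow_nonneg hω.le q))
  have hyR : x - D ≤ R := by
    refine le_max_one_rpow_of_le_add_mul_rpow hy0 hθ0 hθ1 (by positivity) ?_
    calc x - D ≤ |x| + |D| := by linarith [le_abs_self x, neg_abs_le D]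
      _ ≤ |x| + K * (C + (x - D) ^ θ * C ^ (1 - θ)) := by
          grw [hD, hC T hT]
      _ = _ := by ring
  grw [hD, hyR]

/-- Proposition 3.2: a finite lower bound `M ≤ x` exists, independent of the horizon `T`,
such that `|E[H_T·d(λ_T H_T)]| ≤ K(E[H_T] + (x-M)^{α/(q-1)} E[H_T]^{1-α/(q-1)})` for all
`T > 0`. -/
theorem turnpike_uniform_d_bound
    {Ω : Type*} [MeasurableSpace Ω] (P : Measure Ω) [IsProbabilityMeasure P]
    (q α : ℝ) (hq0 : 0 ≤ q) (hq1 : q < 1) (hα1 : q - 1 < α) (hα2 : α ≤ 0)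
    (K : ℝ) (hK : 0 ≤ K)
    (d : ℝ → ℝ) (hdmeas : Measurable d)
    (hd : ∀ z : ℝ, 0 < z → |d z| ≤ K * (1 + z ^ α))
    (x : ℝ)
    (H : ℝ → Ω → ℝ) (lam : ℝ → ℝ)
    (hHmeas : ∀ T : ℝ, 0 < T → Measurable (H T))
    (hHpos : ∀ T : ℝ, 0 < T → ∀ᵐ ω ∂P, 0 < H T ω)
    (hInt1 : ∀ T : ℝ, 0 < T → Integrable (H T) P)
    (hIntq : ∀ T : ℝ, 0 < T → Integrable (fun ω => H T ω ^ q) P)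
    (hIntα : ∀ T : ℝ, 0 < T → Integrable (fun ω => H T ω ^ (1 + α)) P)
    (hsup : ∃ Csup : ℝ, ∀ T : ℝ, 0 < T → ∫ ω, H T ω ∂P ≤ Csup)
    (hlam : ∀ T : ℝ, 0 < T → 0 < lam T)
    (hbudget : ∀ T : ℝ, 0 < T →
      x = (∫ ω, H T ω * d (lam T * H T ω) ∂P) + lam T ^ (q - 1) * ∫ ω, H T ω ^ q ∂P) :
    ∃ M : ℝ, M ≤ x ∧ ∀ T : ℝ, 0 < T →
      |∫ ω, H T ω * d (lam T * H T ω) ∂P| ≤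
        K * ((∫ ω, H T ω ∂P) +
          (x - M) ^ (α / (q - 1)) * (∫ ω, H T ω ∂P) ^ (1 - α / (q - 1))) :=
  turnpike_uniform_d_bound_general P q α hq1 hα1 hα2 K hK d hd x H lam hHpos hInt1 hIntq hIntα hsup
    hlam hbudget
end

section
/- Let γ ∈ [0,1), C ≥ 0, K ≥ 0, ε > 0 and E₀ > 0. Then there exists M₀ ≥ 0 such that: for all real numbers x, G, E with x > ε, G ≤ x, 0 < E ≤ E₀, and |G| ≤ K·(C + (x − G)^γ)·E^{1−γ}, one has G ≥ −M₀·x. -/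
/-! Put `u = x - G ≥ 0` and `A = K E₀^{1-γ}`. The hypothesis gives `u ≤ x + A C + A u^γ`, and since
`γ < 1` the term `A u^γ` is at most `u / 2` plus a constant, so `u ≤ 2x + B` for a constant `B`.
Hence `-G = u - x ≤ x + B ≤ (1 + B/ε) x` because `x > ε`. -/

open Real

/-- Weighted AM-GM with weights `γ, 1 - γ` applied to `s t` and `s ^ (-γ / (1 - γ))`. -/
theorem rpow_le_mul_add_rpow {γ s t : ℝ} (hγ0 : 0 ≤ γ) (hγ1 : γ < 1) (hs : 0 < s) (ht : 0 ≤ t) :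
    t ^ γ ≤ s * t + s ^ (-(γ / (1 - γ))) := by
  have h1γ : 0 < 1 - γ := by linarith
  have amgm := geom_mean_le_arith_mean2_weighted hγ0 h1γ.le (mul_nonneg hs.le ht)
    (rpow_nonneg hs.le (-(γ / (1 - γ)))) (by ring)
  have hexp : -(γ / (1 - γ)) * (1 - γ) = -γ := by field_simp
  have hlhs : (s * t) ^ γ * (s ^ (-(γ / (1 - γ)))) ^ (1 - γ) = t ^ γ := by
    rw [mul_rpow hs.le ht, ← rpow_mul hs.le, hexp, mul_right_comm, ← rpow_add hs, add_neg_cancel,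
      rpow_zero, one_mul]
  have hs_pow : 0 ≤ s ^ (-(γ / (1 - γ))) := rpow_nonneg hs.le _
  have hst : 0 ≤ s * t := mul_nonneg hs.le ht
  rw [hlhs] at amgm
  nlinarith

theorem exists_le_two_mul_add_of_le_add_rpow {γ A : ℝ} (hγ0 : 0 ≤ γ) (hγ1 : γ < 1) (hA : 0 ≤ A) :
    ∃ B, 0 ≤ B ∧ ∀ u y : ℝ, 0 ≤ u → u ≤ y + A * u ^ γ → u ≤ 2 * y + B := by
  have hs : 0 < (2 * A + 1)⁻¹ := by positivity
  set c := ((2 * A + 1)⁻¹) ^ (-(γ / (1 - γ)))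
  refine ⟨2 * A * c, by positivity, fun u y hu huy => ?_⟩
  have hAs : A * (2 * A + 1)⁻¹ ≤ 1 / 2 := by
    rw [← div_eq_mul_inv, div_le_iff₀ (by positivity)]
    linarith
  have hpow : A * u ^ γ ≤ A * (2 * A + 1)⁻¹ * u + A * c := by
    have := mul_le_mul_of_nonneg_left (rpow_le_mul_add_rpow hγ0 hγ1 hs hu) hA
    linarith
  nlinarith [mul_le_mul_of_nonneg_right hAs hu]

/-- Abstract form of Lemma 3.5: there is `M₀ ≥ 0` such that whenever `x > ε`, `G ≤ x`,
`0 < E ≤ E₀` and `|G| ≤ K (C + (x-G)^γ) E^{1-γ}`, one has `G ≥ -M₀ x`. -/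
theorem turnpike_uniform_lower_bound
    (γ C K ε E₀ : ℝ) (hγ0 : 0 ≤ γ) (hγ1 : γ < 1) (hC : 0 ≤ C) (hK : 0 ≤ K)
    (hε : 0 < ε) (hE₀ : 0 < E₀) :
    ∃ M₀ : ℝ, 0 ≤ M₀ ∧ ∀ x G E : ℝ, ε < x → G ≤ x → 0 < E → E ≤ E₀ →
      |G| ≤ K * (C + (x - G) ^ γ) * E ^ (1 - γ) → -M₀ * x ≤ G := by
  set A := K * E₀ ^ (1 - γ)
  have hA : 0 ≤ A := mul_nonneg hK (rpow_nonneg hE₀.le _)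
  obtain ⟨B, hB, habsorb⟩ := exists_le_two_mul_add_of_le_add_rpow hγ0 hγ1 hA
  set D := 2 * (A * C) + B
  have hD : 0 ≤ D := by positivity
  refine ⟨1 + D / ε, by positivity, fun x G E hx hGx hE hEE₀ hbound => ?_⟩
  have hu : 0 ≤ x - G := sub_nonneg.mpr hGx
  have hG : -G ≤ A * (C + (x - G) ^ γ) :=
    calc -G ≤ |G| := neg_le_abs G
      _ ≤ K * (C + (x - G) ^ γ) * E ^ (1 - γ) := hbound
      _ ≤ K * (C + (x - G) ^ γ) * E₀ ^ (1 - γ) := by gcongr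
      _ = A * (C + (x - G) ^ γ) := by ring
  have hux := habsorb (x - G) (x + A * C) hu (by linarith)
  have hDx : D ≤ D / ε * x := by
    rw [div_mul_eq_mul_div, le_div_iff₀ hε]
    gcongr
  linarith
end

section
/- Let (Ω, 𝓕, P) be a probability space, H a random variable with H > 0 P-a.s. and E[H] < ∞, E[H^q] < ∞, E[H^{1+α}] < ∞, where q ∈ [0,1) and α ∈ (q−1, 0]. Let K ≥ 0 and let I₁, J₁ : (0,∞) → ℝ be measurable functions with |I₁(z) − z^{q−1}| ≤ K(1 + z^α) and |J₁(z) − (q−1)z^{q−1}| ≤ K(1 + z^α) for all z > 0. Let λ₁, λ₂ > 0 satisfy E[H·I₁(λ₁H)] = λ₂^{q−1}·E[H^q]. Then |E[H·J₁(λ₁H)] − (q−1)·λ₂^{q−1}·E[H^q]| ≤ K(2 − q)·(E[H] + λ₁^α·E[H^{1+α}]). -/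
open MeasureTheory

/-- Probabilistic core of Theorem 2.7 (turnpike for myopic portfolios), single horizon:
`|E[H·J₁(λ₁H)] - (q-1)λ₂^{q-1}E[H^q]| ≤ K(2-q)(E[H] + λ₁^α E[H^{1+α}])`. -/
theorem turnpike_myopic_single_horizon
    {Ω : Type*} [MeasurableSpace Ω] (P : Measure Ω) [IsProbabilityMeasure P]
    (H : Ω → ℝ) (hHmeas : Measurable H) (hHpos : ∀ᵐ ω ∂P, 0 < H ω)
    (q α : ℝ) (hq0 : 0 ≤ q) (hq1 : q < 1) (hα1 : q - 1 < α) (hα2 : α ≤ 0)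
    (hInt1 : Integrable H P)
    (hIntq : Integrable (fun ω => H ω ^ q) P)
    (hIntα : Integrable (fun ω => H ω ^ (1 + α)) P)
    (K : ℝ) (hK : 0 ≤ K)
    (I₁ J₁ : ℝ → ℝ) (hI₁meas : Measurable I₁) (hJ₁meas : Measurable J₁)
    (hI₁ : ∀ z : ℝ, 0 < z → |I₁ z - z ^ (q - 1)| ≤ K * (1 + z ^ α))
    (hJ₁ : ∀ z : ℝ, 0 < z → |J₁ z - (q - 1) * z ^ (q - 1)| ≤ K * (1 + z ^ α))
    (lam₁ lam₂ : ℝ) (hlam₁ : 0 < lam₁) (hlam₂ : 0 < lam₂)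
    (hbudget : (∫ ω, H ω * I₁ (lam₁ * H ω) ∂P) = lam₂ ^ (q - 1) * ∫ ω, H ω ^ q ∂P) :
    |(∫ ω, H ω * J₁ (lam₁ * H ω) ∂P) - (q - 1) * lam₂ ^ (q - 1) * ∫ ω, H ω ^ q ∂P| ≤
      K * (2 - q) * ((∫ ω, H ω ∂P) + lam₁ ^ α * ∫ ω, H ω ^ (1 + α) ∂P) := by
  -- dominating function
  have hBint : Integrable (fun ω => K * H ω + K * lam₁ ^ α * H ω ^ (1 + α)) P :=
    (hInt1.const_mul K).add (hIntα.const_mul _)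
  -- a.e. pointwise bound for I₁
  have habsI : ∀ᵐ ω ∂P,
      |H ω * I₁ (lam₁ * H ω) - lam₁ ^ (q - 1) * H ω ^ q| ≤
        K * H ω + K * lam₁ ^ α * H ω ^ (1 + α) := by
    filter_upwards [hHpos] with ω hω
    have hz : 0 < lam₁ * H ω := mul_pos hlam₁ hω
    have e1 : lam₁ ^ (q - 1) * H ω ^ q = H ω * (lam₁ * H ω) ^ (q - 1) := by
      rw [Real.mul_rpow hlam₁.le hω.le,
        show q = 1 + (q - 1) by ring, Real.rpow_add hω, Real.rpow_one]
      ring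
    have e2 : H ω * (lam₁ * H ω) ^ α = lam₁ ^ α * H ω ^ (1 + α) := by
      rw [Real.mul_rpow hlam₁.le hω.le, Real.rpow_add hω, Real.rpow_one]
      ring
    calc |H ω * I₁ (lam₁ * H ω) - lam₁ ^ (q - 1) * H ω ^ q|
        = H ω * |I₁ (lam₁ * H ω) - (lam₁ * H ω) ^ (q - 1)| := by
          rw [e1, ← mul_sub, abs_mul, abs_of_pos hω]
      _ ≤ H ω * (K * (1 + (lam₁ * H ω) ^ α)) :=
          mul_le_mul_of_nonneg_left (hI₁ _ hz) hω.le
      _ = K * H ω + K * lam₁ ^ α * H ω ^ (1 + α) := by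
          linear_combination K * e2
  -- a.e. pointwise bound for J₁
  have habsJ : ∀ᵐ ω ∂P,
      |H ω * J₁ (lam₁ * H ω) - (q - 1) * (lam₁ ^ (q - 1) * H ω ^ q)| ≤
        K * H ω + K * lam₁ ^ α * H ω ^ (1 + α) := by
    filter_upwards [hHpos] with ω hω
    have hz : 0 < lam₁ * H ω := mul_pos hlam₁ hω
    have e1 : lam₁ ^ (q - 1) * H ω ^ q = H ω * (lam₁ * H ω) ^ (q - 1) := by
      rw [Real.mul_rpow hlam₁.le hω.le,
        show q = 1 + (q - 1) by ring, Real.rpow_add hω, Real.rpow_one]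
      ring
    have e2 : H ω * (lam₁ * H ω) ^ α = lam₁ ^ α * H ω ^ (1 + α) := by
      rw [Real.mul_rpow hlam₁.le hω.le, Real.rpow_add hω, Real.rpow_one]
      ring
    calc |H ω * J₁ (lam₁ * H ω) - (q - 1) * (lam₁ ^ (q - 1) * H ω ^ q)|
        = H ω * |J₁ (lam₁ * H ω) - (q - 1) * (lam₁ * H ω) ^ (q - 1)| := by
          rw [e1, show H ω * J₁ (lam₁ * H ω) -
              (q - 1) * (H ω * (lam₁ * H ω) ^ (q - 1)) =
              H ω * (J₁ (lam₁ * H ω) - (q - 1) * (lam₁ * H ω) ^ (q - 1)) by ring,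
            abs_mul, abs_of_pos hω]
      _ ≤ H ω * (K * (1 + (lam₁ * H ω) ^ α)) :=
          mul_le_mul_of_nonneg_left (hJ₁ _ hz) hω.le
      _ = K * H ω + K * lam₁ ^ α * H ω ^ (1 + α) := by
          linear_combination K * e2
  -- measurability
  have hmI : AEStronglyMeasurable (fun ω => H ω * I₁ (lam₁ * H ω)) P :=
    (hHmeas.mul (hI₁meas.comp (measurable_const.mul hHmeas))).aestronglyMeasurable
  have hmJ : AEStronglyMeasurable (fun ω => H ω * J₁ (lam₁ * H ω)) P :=
    (hHmeas.mul (hJ₁meas.comp (measurable_const.mul hHmeas))).aestronglyMeasurable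
  -- integrability of the differences
  have hdI : Integrable
      (fun ω => H ω * I₁ (lam₁ * H ω) - lam₁ ^ (q - 1) * H ω ^ q) P := by
    refine hBint.mono' (hmI.sub ((hIntq.const_mul _).aestronglyMeasurable)) ?_
    simpa only [Real.norm_eq_abs] using habsI
  have hdJ : Integrable
      (fun ω => H ω * J₁ (lam₁ * H ω) - (q - 1) * (lam₁ ^ (q - 1) * H ω ^ q)) P := by
    refine hBint.mono' (hmJ.sub (((hIntq.const_mul _).const_mul _).aestronglyMeasurable)) ?_
    simpa only [Real.norm_eq_abs] using habsJ
  -- integrability of the full integrands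
  have hgq : Integrable (fun ω => lam₁ ^ (q - 1) * H ω ^ q) P := hIntq.const_mul _
  have hfI : Integrable (fun ω => H ω * I₁ (lam₁ * H ω)) P :=
    (hdI.add hgq).congr (Filter.Eventually.of_forall fun ω => by
      simp only [Pi.add_apply]; ring)
  have hfJ : Integrable (fun ω => H ω * J₁ (lam₁ * H ω)) P :=
    (hdJ.add (hgq.const_mul (q - 1))).congr (Filter.Eventually.of_forall fun ω => by
      simp only [Pi.add_apply]; ring)
  -- value of the integral of the bound
  have hDval : (∫ ω, (K * H ω + K * lam₁ ^ α * H ω ^ (1 + α)) ∂P)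
      = K * (∫ ω, H ω ∂P) + K * lam₁ ^ α * (∫ ω, H ω ^ (1 + α) ∂P) := by
    rw [integral_add (hInt1.const_mul K) (hIntα.const_mul _),
      integral_const_mul, integral_const_mul]
  set D := K * (∫ ω, H ω ∂P) + K * lam₁ ^ α * (∫ ω, H ω ^ (1 + α) ∂P) with hDdef
  -- bound the two integral differences
  have keyI : |(∫ ω, H ω * I₁ (lam₁ * H ω) ∂P) - lam₁ ^ (q - 1) * ∫ ω, H ω ^ q ∂P| ≤ D := by
    rw [show lam₁ ^ (q - 1) * ∫ ω, H ω ^ q ∂P = ∫ ω, lam₁ ^ (q - 1) * H ω ^ q ∂P by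
        rw [integral_const_mul], ← integral_sub hfI hgq]
    calc |∫ ω, (H ω * I₁ (lam₁ * H ω) - lam₁ ^ (q - 1) * H ω ^ q) ∂P|
        ≤ ∫ ω, |H ω * I₁ (lam₁ * H ω) - lam₁ ^ (q - 1) * H ω ^ q| ∂P := by
          simpa only [Real.norm_eq_abs] using
            norm_integral_le_integral_norm
              (fun ω => H ω * I₁ (lam₁ * H ω) - lam₁ ^ (q - 1) * H ω ^ q)
      _ ≤ ∫ ω, (K * H ω + K * lam₁ ^ α * H ω ^ (1 + α)) ∂P :=
          integral_mono_ae hdI.abs hBint habsI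
      _ = D := hDval
  have keyJ : |(∫ ω, H ω * J₁ (lam₁ * H ω) ∂P)
      - (q - 1) * (lam₁ ^ (q - 1) * ∫ ω, H ω ^ q ∂P)| ≤ D := by
    rw [show (q - 1) * (lam₁ ^ (q - 1) * ∫ ω, H ω ^ q ∂P)
        = ∫ ω, (q - 1) * (lam₁ ^ (q - 1) * H ω ^ q) ∂P by
        rw [integral_const_mul, integral_const_mul],
      ← integral_sub hfJ (hgq.const_mul _)]
    calc |∫ ω, (H ω * J₁ (lam₁ * H ω) - (q - 1) * (lam₁ ^ (q - 1) * H ω ^ q)) ∂P|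
        ≤ ∫ ω, |H ω * J₁ (lam₁ * H ω) - (q - 1) * (lam₁ ^ (q - 1) * H ω ^ q)| ∂P := by
          simpa only [Real.norm_eq_abs] using
            norm_integral_le_integral_norm
              (fun ω => H ω * J₁ (lam₁ * H ω) - (q - 1) * (lam₁ ^ (q - 1) * H ω ^ q))
      _ ≤ ∫ ω, (K * H ω + K * lam₁ ^ α * H ω ^ (1 + α)) ∂P :=
          integral_mono_ae hdJ.abs hBint habsJ
      _ = D := hDval
  -- from the budget constraint
  have keyB : |lam₂ ^ (q - 1) * (∫ ω, H ω ^ q ∂P)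
      - lam₁ ^ (q - 1) * (∫ ω, H ω ^ q ∂P)| ≤ D := by
    rw [← hbudget]; exact keyI
  -- combine via the triangle inequality
  set X := ∫ ω, H ω * J₁ (lam₁ * H ω) ∂P
  set Y := ∫ ω, H ω ^ q ∂P
  have tri : |X - (q - 1) * lam₂ ^ (q - 1) * Y| ≤
      |X - (q - 1) * (lam₁ ^ (q - 1) * Y)|
      + (1 - q) * |lam₂ ^ (q - 1) * Y - lam₁ ^ (q - 1) * Y| := by
    have h1 : X - (q - 1) * lam₂ ^ (q - 1) * Y =
        (X - (q - 1) * (lam₁ ^ (q - 1) * Y))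
        + (q - 1) * (lam₁ ^ (q - 1) * Y - lam₂ ^ (q - 1) * Y) := by ring
    rw [h1]
    refine (abs_add_le _ _).trans ?_
    have h2 : |(q - 1) * (lam₁ ^ (q - 1) * Y - lam₂ ^ (q - 1) * Y)|
        = (1 - q) * |lam₂ ^ (q - 1) * Y - lam₁ ^ (q - 1) * Y| := by
      rw [abs_mul, abs_of_nonpos (by linarith : q - 1 ≤ 0), abs_sub_comm]
      ring
    rw [h2]
  have hDval2 : K * (2 - q) * ((∫ ω, H ω ∂P) + lam₁ ^ α * ∫ ω, H ω ^ (1 + α) ∂P)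
      = D + (1 - q) * D := by rw [hDdef]; ring
  rw [hDval2]
  refine tri.trans ?_
  have := mul_le_mul_of_nonneg_left keyB (by linarith : (0:ℝ) ≤ 1 - q)
  linarith [keyJ]
end

section
/- Let (Ω, 𝓕, P) be a probability space, q ∈ [0,1), α ∈ (q−1, 0], K ≥ 0, and let I₁, J₁ : (0,∞) → ℝ be measurable with |I₁(z) − z^{q−1}| ≤ K(1 + z^α) and |J₁(z) − (q−1)z^{q−1}| ≤ K(1 + z^α) for all z > 0. Let (H_T)_{T>0} be random variables with H_T > 0 P-a.s., E[H_T] < ∞, E[H_T^q] < ∞, E[H_T^{1+α}] < ∞ for every T, and sup_{T>0} E[H_T] < ∞; let x ∈ ℝ and λ₁(T), λ₂(T) > 0 satisfy E[H_T·I₁(λ₁(T)H_T)] = λ₂(T)^{q−1}·E[H_T^q] = x for every T > 0. Then there exists M ∈ ℝ with M ≤ x, independent of T, such that for every T > 0: |E[H_T·J₁(λ₁(T)H_T)] − (q−1)·λ₂(T)^{q−1}·E[H_T^q]| ≤ K(2 − q)·(E[H_T] + (x − M)^{α/(q−1)}·E[H_T]^{1−α/(q−1)}). -/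
/-!
Fix `T` and write `f = H_T`, `c = λ₁(T)`, `E = E[f]`, `A = c^{q-1} E[f^q]`, `β = α/(q-1) ∈ [0,1)`.
Since `f (c f)^r = c^r f^{1+r}`, the error bounds on `I₁` and `J₁` give
`|E[f I₁(c f)] - A|, |E[f J₁(c f)] - (q-1) A| ≤ K (E + c^α E[f^{1+α}])`, and Hölder's inequality
with exponents `1/β`, `1/(1-β)` applied to `f^{1+α} = (f^q)^β f^{1-β}` interpolates
`c^α E[f^{1+α}] ≤ A^β E^{1-β}`. As `E[f I₁(c f)] = x`, the triangle inequality gives the estimate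
with `A` in place of `x - M`. The bound for `I₁` also gives `A ≤ x + K C + K C A^β` with
`C = max (sup_T E[H_T]) 1`, and because `β < 1` this caps `A` by a constant independent of `T`.
-/

open MeasureTheory

theorem mul_rpow_mul_self {c z : ℝ} (hc : 0 ≤ c) (hz : 0 < z) (r : ℝ) :
    z * (c * z) ^ r = c ^ r * z ^ (1 + r) := by
  rw [Real.mul_rpow hc hz.le, Real.rpow_add hz, Real.rpow_one]
  ring

theorem le_max_of_le_add_mul_rpow {A a b β : ℝ} (hb : 0 ≤ b) (hβ : β < 1)
    (h : A ≤ a + b * A ^ β) : A ≤ max (2 * a) ((2 * b) ^ (1 - β)⁻¹) := by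
  by_contra! hlt
  obtain ⟨ha, hb'⟩ := max_lt_iff.1 hlt
  have hA : 0 < A := (Real.rpow_nonneg (by positivity) _).trans_lt hb'
  have hbA : 2 * b < A ^ (1 - β) :=
    (Real.rpow_inv_lt_iff_of_pos (by positivity) hA.le (sub_pos.2 hβ)).1 hb'
  have hsplit : A ^ (1 - β) * A ^ β = A := by
    rw [← Real.rpow_add hA, sub_add_cancel, Real.rpow_one]
  nlinarith [mul_lt_mul_of_pos_right hbA (Real.rpow_pos_of_pos hA β)]

theorem rpow_le_max_self_one {x s : ℝ} (hx : 0 ≤ x) (hs0 : 0 ≤ s) (hs1 : s ≤ 1) :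
    x ^ s ≤ max x 1 := by
  rcases le_total x 1 with h | h
  · exact (Real.rpow_le_one hx h hs0).trans (le_max_right _ _)
  · exact (Real.rpow_le_self_of_one_le h hs1).trans (le_max_left _ _)

section Integrals

variable {Ω : Type*} [MeasurableSpace Ω] {μ : Measure Ω}

theorem integral_rpow_mul_rpow_le_s6 {f g : Ω → ℝ} (hf : 0 ≤ᵐ[μ] f) (hg : 0 ≤ᵐ[μ] g)
    (hfi : Integrable f μ) (hgi : Integrable g μ) {p r : ℝ} (hp : 0 ≤ p) (hr : 0 ≤ r)
    (hpr : p + r = 1) :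
    ∫ ω, f ω ^ p * g ω ^ r ∂μ ≤ (∫ ω, f ω ∂μ) ^ p * (∫ ω, g ω ∂μ) ^ r := by
  have hfg : 0 ≤ᵐ[μ] fun ω ↦ f ω ^ p * g ω ^ r := by
    filter_upwards [hf, hg] with ω hfω hgω
    exact mul_nonneg (Real.rpow_nonneg hfω p) (Real.rpow_nonneg hgω r)
  have hmeas : AEStronglyMeasurable (fun ω ↦ f ω ^ p * g ω ^ r) μ :=
    ((hfi.aemeasurable.pow_const p).mul (hgi.aemeasurable.pow_const r)).aestronglyMeasurable
  have hofReal : (fun ω ↦ ENNReal.ofReal (f ω ^ p * g ω ^ r)) =ᵐ[μ]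
      fun ω ↦ ENNReal.ofReal (f ω) ^ p * ENNReal.ofReal (g ω) ^ r := by
    filter_upwards [hf, hg] with ω hfω hgω
    rw [ENNReal.ofReal_mul (Real.rpow_nonneg hfω p), ENNReal.ofReal_rpow_of_nonneg hfω hp,
      ENNReal.ofReal_rpow_of_nonneg hgω hr]
  rw [integral_eq_lintegral_of_nonneg_ae hfg hmeas, integral_eq_lintegral_of_nonneg_ae hf
    hfi.1, integral_eq_lintegral_of_nonneg_ae hg hgi.1, ENNReal.toReal_rpow,
    ENNReal.toReal_rpow, ← ENNReal.toReal_mul, lintegral_congr_ae hofReal]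
  refine ENNReal.toReal_mono ?_ (ENNReal.lintegral_mul_norm_pow_le
    hfi.aemeasurable.ennreal_ofReal hgi.aemeasurable.ennreal_ofReal hp hr hpr)
  exact ENNReal.mul_ne_top (ENNReal.rpow_ne_top_of_nonneg hp hfi.lintegral_lt_top.ne)
    (ENNReal.rpow_ne_top_of_nonneg hr hgi.lintegral_lt_top.ne)

variable {f : Ω → ℝ} {g I J : ℝ → ℝ} {a c p q α β K x C D : ℝ}

theorem integral_rpow_one_add_le (hβ0 : 0 ≤ β) (hβ1 : β ≤ 1) (hαβ : β * (q - 1) = α)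
    (hf : ∀ᵐ ω ∂μ, 0 < f ω) (hf1 : Integrable f μ) (hfq : Integrable (fun ω ↦ f ω ^ q) μ) :
    ∫ ω, f ω ^ (1 + α) ∂μ ≤ (∫ ω, f ω ^ q ∂μ) ^ β * (∫ ω, f ω ∂μ) ^ (1 - β) := by
  have hfq0 : 0 ≤ᵐ[μ] fun ω ↦ f ω ^ q := hf.mono fun ω hω ↦ Real.rpow_nonneg hω.le q
  refine le_of_eq_of_le (integral_congr_ae ?_) (integral_rpow_mul_rpow_le_s6 hfq0
    (hf.mono fun ω hω ↦ hω.le) hfq hf1 hβ0 (sub_nonneg.2 hβ1) (add_sub_cancel β 1))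
  filter_upwards [hf] with ω hω
  rw [← Real.rpow_mul hω.le, ← Real.rpow_add hω, ← hαβ]
  ring_nf

theorem abs_integral_mul_comp_sub_le (hg : Measurable g)
    (hgK : ∀ z, 0 < z → |g z - a * z ^ (p - 1)| ≤ K * (1 + z ^ α)) (hc : 0 < c)
    (hf : ∀ᵐ ω ∂μ, 0 < f ω) (hf1 : Integrable f μ) (hfp : Integrable (fun ω ↦ f ω ^ p) μ)
    (hfα : Integrable (fun ω ↦ f ω ^ (1 + α)) μ) :
    |∫ ω, f ω * g (c * f ω) ∂μ - a * (c ^ (p - 1) * ∫ ω, f ω ^ p ∂μ)| ≤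
      K * ((∫ ω, f ω ∂μ) + c ^ α * ∫ ω, f ω ^ (1 + α) ∂μ) := by
  set err : Ω → ℝ := fun ω ↦ f ω * g (c * f ω) - a * c ^ (p - 1) * f ω ^ p
  have herr_le : ∀ᵐ ω ∂μ, ‖err ω‖ ≤ K * (f ω + c ^ α * f ω ^ (1 + α)) := by
    filter_upwards [hf] with ω hω
    have herr_eq : err ω = f ω * (g (c * f ω) - a * (c * f ω) ^ (p - 1)) := by
      rw [mul_sub, mul_left_comm _ a, mul_rpow_mul_self hc.le hω, add_sub_cancel, ← mul_assoc]
    calc ‖err ω‖ = f ω * |g (c * f ω) - a * (c * f ω) ^ (p - 1)| := by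
          rw [Real.norm_eq_abs, herr_eq, abs_mul, abs_of_pos hω]
      _ ≤ f ω * (K * (1 + (c * f ω) ^ α)) := mul_le_mul_of_nonneg_left (hgK _ (mul_pos hc hω)) hω.le
      _ = K * (f ω + c ^ α * f ω ^ (1 + α)) := by
          rw [mul_left_comm, mul_add, mul_one, mul_rpow_mul_self hc.le hω]
  have hbound : Integrable (fun ω ↦ K * (f ω + c ^ α * f ω ^ (1 + α))) μ :=
    (hf1.add (hfα.const_mul _)).const_mul K
  have herr : Integrable err μ := by
    refine hbound.mono' ?_ herr_le
    exact ((hf1.aemeasurable.mul (hg.comp_aemeasurable (hf1.aemeasurable.const_mul c))).sub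
      (hfp.aemeasurable.const_mul _)).aestronglyMeasurable
  have hsplit : ∫ ω, f ω * g (c * f ω) ∂μ - a * (c ^ (p - 1) * ∫ ω, f ω ^ p ∂μ) =
      ∫ ω, err ω ∂μ := by
    have hfg : (fun ω ↦ f ω * g (c * f ω)) = fun ω ↦ err ω + a * c ^ (p - 1) * f ω ^ p := by
      funext ω
      simp only [err, sub_add_cancel]
    rw [hfg, integral_add herr (hfp.const_mul _), integral_const_mul]
    ring
  calc |∫ ω, f ω * g (c * f ω) ∂μ - a * (c ^ (p - 1) * ∫ ω, f ω ^ p ∂μ)|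
      ≤ ∫ ω, ‖err ω‖ ∂μ := hsplit ▸ norm_integral_le_integral_norm err
    _ ≤ ∫ ω, K * (f ω + c ^ α * f ω ^ (1 + α)) ∂μ := integral_mono_ae herr.norm hbound herr_le
    _ = K * ((∫ ω, f ω ∂μ) + c ^ α * ∫ ω, f ω ^ (1 + α) ∂μ) := by
      rw [integral_const_mul, integral_add hf1 (hfα.const_mul _), integral_const_mul]

theorem abs_integral_mul_comp_sub_le_interpolated (hK : 0 ≤ K) (hβ0 : 0 ≤ β) (hβ1 : β ≤ 1)
    (hαβ : β * (q - 1) = α) (hg : Measurable g)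
    (hgK : ∀ z, 0 < z → |g z - a * z ^ (q - 1)| ≤ K * (1 + z ^ α)) (hc : 0 < c)
    (hf : ∀ᵐ ω ∂μ, 0 < f ω) (hf1 : Integrable f μ) (hfq : Integrable (fun ω ↦ f ω ^ q) μ)
    (hfα : Integrable (fun ω ↦ f ω ^ (1 + α)) μ) :
    |∫ ω, f ω * g (c * f ω) ∂μ - a * (c ^ (q - 1) * ∫ ω, f ω ^ q ∂μ)| ≤
      K * ((∫ ω, f ω ∂μ) + (c ^ (q - 1) * ∫ ω, f ω ^ q ∂μ) ^ β * (∫ ω, f ω ∂μ) ^ (1 - β)) := by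
  refine (abs_integral_mul_comp_sub_le hg hgK hc hf hf1 hfq hfα).trans
    (mul_le_mul_of_nonneg_left (add_le_add_right ?_ _) hK)
  have hQ : 0 ≤ ∫ ω, f ω ^ q ∂μ :=
    integral_nonneg_of_ae (hf.mono fun ω hω ↦ Real.rpow_nonneg hω.le q)
  have hcα : c ^ α = (c ^ (q - 1)) ^ β := by rw [← Real.rpow_mul hc.le, mul_comm, hαβ]
  rw [hcα, Real.mul_rpow (Real.rpow_nonneg hc.le _) hQ, mul_assoc]
  exact mul_le_mul_of_nonneg_left (integral_rpow_one_add_le hβ0 hβ1 hαβ hf hf1 hfq)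
    (by positivity)

theorem abs_integral_mul_comp_sub_le_interpolated_of_one (hK : 0 ≤ K) (hβ0 : 0 ≤ β)
    (hβ1 : β ≤ 1) (hαβ : β * (q - 1) = α) (hI : Measurable I)
    (hIK : ∀ z, 0 < z → |I z - z ^ (q - 1)| ≤ K * (1 + z ^ α)) (hc : 0 < c)
    (hf : ∀ᵐ ω ∂μ, 0 < f ω) (hf1 : Integrable f μ) (hfq : Integrable (fun ω ↦ f ω ^ q) μ)
    (hfα : Integrable (fun ω ↦ f ω ^ (1 + α)) μ) :
    |∫ ω, f ω * I (c * f ω) ∂μ - c ^ (q - 1) * ∫ ω, f ω ^ q ∂μ| ≤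
      K * ((∫ ω, f ω ∂μ) + (c ^ (q - 1) * ∫ ω, f ω ^ q ∂μ) ^ β * (∫ ω, f ω ∂μ) ^ (1 - β)) := by
  simpa only [one_mul] using abs_integral_mul_comp_sub_le_interpolated (a := 1) hK hβ0 hβ1 hαβ
    hI (fun z hz ↦ by simpa only [one_mul] using hIK z hz) hc hf hf1 hfq hfα

theorem abs_integral_mul_comp_sub_mul_integral_mul_comp_le (hK : 0 ≤ K) (hq : q < 1)
    (hβ0 : 0 ≤ β) (hβ1 : β ≤ 1) (hαβ : β * (q - 1) = α) (hI : Measurable I) (hJ : Measurable J)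
    (hIK : ∀ z, 0 < z → |I z - z ^ (q - 1)| ≤ K * (1 + z ^ α))
    (hJK : ∀ z, 0 < z → |J z - (q - 1) * z ^ (q - 1)| ≤ K * (1 + z ^ α)) (hc : 0 < c)
    (hf : ∀ᵐ ω ∂μ, 0 < f ω) (hf1 : Integrable f μ) (hfq : Integrable (fun ω ↦ f ω ^ q) μ)
    (hfα : Integrable (fun ω ↦ f ω ^ (1 + α)) μ) (hAD : c ^ (q - 1) * ∫ ω, f ω ^ q ∂μ ≤ D) :
    |∫ ω, f ω * J (c * f ω) ∂μ - (q - 1) * ∫ ω, f ω * I (c * f ω) ∂μ| ≤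
      K * (2 - q) * ((∫ ω, f ω ∂μ) + D ^ β * (∫ ω, f ω ∂μ) ^ (1 - β)) := by
  set A := c ^ (q - 1) * ∫ ω, f ω ^ q ∂μ
  set B := (∫ ω, f ω ∂μ) + A ^ β * (∫ ω, f ω ∂μ) ^ (1 - β)
  have hIA : |∫ ω, f ω * I (c * f ω) ∂μ - A| ≤ K * B :=
    abs_integral_mul_comp_sub_le_interpolated_of_one hK hβ0 hβ1 hαβ hI hIK hc hf hf1 hfq hfα
  have hJA : |∫ ω, f ω * J (c * f ω) ∂μ - (q - 1) * A| ≤ K * B :=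
    abs_integral_mul_comp_sub_le_interpolated hK hβ0 hβ1 hαβ hJ hJK hc hf hf1 hfq hfα
  calc |∫ ω, f ω * J (c * f ω) ∂μ - (q - 1) * ∫ ω, f ω * I (c * f ω) ∂μ|
      = |(∫ ω, f ω * J (c * f ω) ∂μ - (q - 1) * A) -
          (q - 1) * (∫ ω, f ω * I (c * f ω) ∂μ - A)| := by
        congr 1; ring
    _ ≤ |∫ ω, f ω * J (c * f ω) ∂μ - (q - 1) * A| +
          (1 - q) * |∫ ω, f ω * I (c * f ω) ∂μ - A| := by
        refine (abs_sub _ _).trans_eq ?_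
        rw [abs_mul, abs_of_neg (sub_neg.2 hq), neg_sub]
    _ ≤ K * B + (1 - q) * (K * B) := by gcongr
    _ = K * (2 - q) * B := by ring
    _ ≤ K * (2 - q) * ((∫ ω, f ω ∂μ) + D ^ β * (∫ ω, f ω ∂μ) ^ (1 - β)) := by
        have hA0 : 0 ≤ A := mul_nonneg (Real.rpow_nonneg hc.le _)
          (integral_nonneg_of_ae (hf.mono fun ω hω ↦ Real.rpow_nonneg hω.le q))
        have hE0 : 0 ≤ ∫ ω, f ω ∂μ := integral_nonneg_of_ae (hf.mono fun ω hω ↦ hω.le)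
        have h2q : 0 ≤ K * (2 - q) := mul_nonneg hK (by linarith)
        simp only [B]
        gcongr

theorem rpow_mul_integral_rpow_le_of_integral_mul_comp_eq (hK : 0 ≤ K) (hβ0 : 0 ≤ β)
    (hβ1 : β < 1) (hαβ : β * (q - 1) = α) (hI : Measurable I)
    (hIK : ∀ z, 0 < z → |I z - z ^ (q - 1)| ≤ K * (1 + z ^ α)) (hc : 0 < c)
    (hf : ∀ᵐ ω ∂μ, 0 < f ω) (hf1 : Integrable f μ) (hfq : Integrable (fun ω ↦ f ω ^ q) μ)
    (hfα : Integrable (fun ω ↦ f ω ^ (1 + α)) μ) (hx : ∫ ω, f ω * I (c * f ω) ∂μ = x)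
    (hEC : ∫ ω, f ω ∂μ ≤ C) (hC : 1 ≤ C) :
    c ^ (q - 1) * ∫ ω, f ω ^ q ∂μ ≤ max (2 * (x + K * C)) ((2 * (K * C)) ^ (1 - β)⁻¹) := by
  set A := c ^ (q - 1) * ∫ ω, f ω ^ q ∂μ
  set E := ∫ ω, f ω ∂μ
  have hA0 : 0 ≤ A := mul_nonneg (Real.rpow_nonneg hc.le _)
    (integral_nonneg_of_ae (hf.mono fun ω hω ↦ Real.rpow_nonneg hω.le q))
  have hE0 : 0 ≤ E := integral_nonneg_of_ae (hf.mono fun ω hω ↦ hω.le)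
  have hEβ : E ^ (1 - β) ≤ C :=
    (rpow_le_max_self_one hE0 (by linarith) (by linarith)).trans (max_le hEC hC)
  have hIA : |x - A| ≤ K * (E + A ^ β * E ^ (1 - β)) := hx ▸
    abs_integral_mul_comp_sub_le_interpolated_of_one hK hβ0 hβ1.le hαβ hI hIK hc hf hf1 hfq hfα
  refine le_max_of_le_add_mul_rpow (by positivity) hβ1 ?_
  calc A ≤ x + K * (E + A ^ β * E ^ (1 - β)) := by linarith [(abs_le.1 hIA).1]
    _ ≤ x + K * (C + A ^ β * C) := by gcongr
    _ = x + K * C + K * C * A ^ β := by ring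

end Integrals

theorem turnpike_myopic_rate_general
    {Ω : Type*} [MeasurableSpace Ω] (P : Measure Ω)
    (q α : ℝ) (hq1 : q < 1) (hα1 : q - 1 < α) (hα2 : α ≤ 0)
    (K : ℝ) (hK : 0 ≤ K)
    (I₁ J₁ : ℝ → ℝ) (hI₁meas : Measurable I₁) (hJ₁meas : Measurable J₁)
    (hI₁ : ∀ z : ℝ, 0 < z → |I₁ z - z ^ (q - 1)| ≤ K * (1 + z ^ α))
    (hJ₁ : ∀ z : ℝ, 0 < z → |J₁ z - (q - 1) * z ^ (q - 1)| ≤ K * (1 + z ^ α))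
    (H : ℝ → Ω → ℝ) (lam₁ lam₂ : ℝ → ℝ) (x : ℝ)
    (hHpos : ∀ T : ℝ, 0 < T → ∀ᵐ ω ∂P, 0 < H T ω)
    (hInt1 : ∀ T : ℝ, 0 < T → Integrable (H T) P)
    (hIntq : ∀ T : ℝ, 0 < T → Integrable (fun ω => H T ω ^ q) P)
    (hIntα : ∀ T : ℝ, 0 < T → Integrable (fun ω => H T ω ^ (1 + α)) P)
    (hsup : ∃ Csup : ℝ, ∀ T : ℝ, 0 < T → ∫ ω, H T ω ∂P ≤ Csup)
    (hlam₁ : ∀ T : ℝ, 0 < T → 0 < lam₁ T)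
    (hbudget₁ : ∀ T : ℝ, 0 < T →
      (∫ ω, H T ω * I₁ (lam₁ T * H T ω) ∂P) = lam₂ T ^ (q - 1) * ∫ ω, H T ω ^ q ∂P)
    (hbudget₂ : ∀ T : ℝ, 0 < T → lam₂ T ^ (q - 1) * (∫ ω, H T ω ^ q ∂P) = x) :
    ∃ M : ℝ, M ≤ x ∧ ∀ T : ℝ, 0 < T →
      |(∫ ω, H T ω * J₁ (lam₁ T * H T ω) ∂P) -
          (q - 1) * lam₂ T ^ (q - 1) * ∫ ω, H T ω ^ q ∂P| ≤
        K * (2 - q) * ((∫ ω, H T ω ∂P) +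
          (x - M) ^ (α / (q - 1)) * (∫ ω, H T ω ∂P) ^ (1 - α / (q - 1))) := by
  obtain ⟨Csup, hCsup⟩ := hsup
  have hq : q - 1 < 0 := by linarith
  set β := α / (q - 1)
  have hαβ : β * (q - 1) = α := div_mul_cancel₀ α hq.ne
  have hβ0 : 0 ≤ β := div_nonneg_of_nonpos hα2 hq.le
  have hβ1 : β < 1 := (div_lt_one_of_neg hq).2 hα1
  set C := max Csup 1
  refine ⟨x - max (2 * (x + K * C)) ((2 * (K * C)) ^ (1 - β)⁻¹),
    sub_le_self _ ((Real.rpow_nonneg (by positivity) _).trans (le_max_right _ _)), fun T hT ↦ ?_⟩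
  have hx := (hbudget₁ T hT).trans (hbudget₂ T hT)
  have hA := rpow_mul_integral_rpow_le_of_integral_mul_comp_eq hK hβ0 hβ1 hαβ hI₁meas hI₁
    (hlam₁ T hT) (hHpos T hT) (hInt1 T hT) (hIntq T hT) (hIntα T hT) hx
    ((hCsup T hT).trans (le_max_left _ _)) (le_max_right _ _)
  have hgap := abs_integral_mul_comp_sub_mul_integral_mul_comp_le hK hq1 hβ0 hβ1.le hαβ
    hI₁meas hJ₁meas hI₁ hJ₁ (hlam₁ T hT) (hHpos T hT) (hInt1 T hT) (hIntq T hT) (hIntα T hT) hA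
  rw [hx] at hgap
  rwa [sub_sub_cancel, mul_assoc, hbudget₂ T hT]

/-- Theorem 2.7 (turnpike for myopic portfolios) with the market factor stripped out:
there exists `M ≤ x`, independent of the horizon `T`, such that for all `T > 0`,
`|E[H_T J₁(λ₁(T)H_T)] - (q-1)λ₂(T)^{q-1}E[H_T^q]|
  ≤ K(2-q)(E[H_T] + (x-M)^{α/(q-1)} E[H_T]^{1-α/(q-1)})`. -/
theorem turnpike_myopic_rate
    {Ω : Type*} [MeasurableSpace Ω] (P : Measure Ω) [IsProbabilityMeasure P]
    (q α : ℝ) (hq0 : 0 ≤ q) (hq1 : q < 1) (hα1 : q - 1 < α) (hα2 : α ≤ 0)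
    (K : ℝ) (hK : 0 ≤ K)
    (I₁ J₁ : ℝ → ℝ) (hI₁meas : Measurable I₁) (hJ₁meas : Measurable J₁)
    (hI₁ : ∀ z : ℝ, 0 < z → |I₁ z - z ^ (q - 1)| ≤ K * (1 + z ^ α))
    (hJ₁ : ∀ z : ℝ, 0 < z → |J₁ z - (q - 1) * z ^ (q - 1)| ≤ K * (1 + z ^ α))
    (H : ℝ → Ω → ℝ) (lam₁ lam₂ : ℝ → ℝ) (x : ℝ)
    (hHmeas : ∀ T : ℝ, 0 < T → Measurable (H T))
    (hHpos : ∀ T : ℝ, 0 < T → ∀ᵐ ω ∂P, 0 < H T ω)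
    (hInt1 : ∀ T : ℝ, 0 < T → Integrable (H T) P)
    (hIntq : ∀ T : ℝ, 0 < T → Integrable (fun ω => H T ω ^ q) P)
    (hIntα : ∀ T : ℝ, 0 < T → Integrable (fun ω => H T ω ^ (1 + α)) P)
    (hsup : ∃ Csup : ℝ, ∀ T : ℝ, 0 < T → ∫ ω, H T ω ∂P ≤ Csup)
    (hlam₁ : ∀ T : ℝ, 0 < T → 0 < lam₁ T)
    (hlam₂ : ∀ T : ℝ, 0 < T → 0 < lam₂ T)
    (hbudget₁ : ∀ T : ℝ, 0 < T →
      (∫ ω, H T ω * I₁ (lam₁ T * H T ω) ∂P) = lam₂ T ^ (q - 1) * ∫ ω, H T ω ^ q ∂P)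
    (hbudget₂ : ∀ T : ℝ, 0 < T → lam₂ T ^ (q - 1) * (∫ ω, H T ω ^ q ∂P) = x) :
    ∃ M : ℝ, M ≤ x ∧ ∀ T : ℝ, 0 < T →
      |(∫ ω, H T ω * J₁ (lam₁ T * H T ω) ∂P) -
          (q - 1) * lam₂ T ^ (q - 1) * ∫ ω, H T ω ^ q ∂P| ≤
        K * (2 - q) * ((∫ ω, H T ω ∂P) +
          (x - M) ^ (α / (q - 1)) * (∫ ω, H T ω ∂P) ^ (1 - α / (q - 1))) :=
  turnpike_myopic_rate_general P q α hq1 hα1 hα2 K hK I₁ J₁ hI₁meas hJ₁meas hI₁ hJ₁ H lam₁ lam₂ x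
    hHpos hInt1 hIntq hIntα hsup hlam₁ hbudget₁ hbudget₂
end

section
/- Let (Ω, 𝓕, P) be a probability space, H a random variable with H > 0 P-a.s. and E[H] < ∞, E[H^q] < ∞, E[H^{1+α}] < ∞, where q ∈ [0,1) and α ∈ (q−1, 0]. Let K ≥ 0 and I₁ : (0,∞) → ℝ be measurable with |I₁(z) − z^{q−1}| ≤ K(1 + z^α) for all z > 0, and let λ₁, λ₂ > 0 satisfy E[H·I₁(λ₁H)] = λ₂^{q−1}·E[H^q]. Then E[H·|I₁(λ₁H) − (λ₂H)^{q−1}|] ≤ 2·E[H·|I₁(λ₁H) − (λ₁H)^{q−1}|]. -/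
open MeasureTheory

/-- Key estimate in the proof of Theorem 2.10: the time-0 value of the terminal-wealth
difference satisfies `E[H|I₁(λ₁H) - (λ₂H)^{q-1}|] ≤ 2 E[H|I₁(λ₁H) - (λ₁H)^{q-1}|]`. -/
theorem turnpike_wealth_difference_bound
    {Ω : Type*} [MeasurableSpace Ω] (P : Measure Ω) [IsProbabilityMeasure P]
    (H : Ω → ℝ) (hHmeas : Measurable H) (hHpos : ∀ᵐ ω ∂P, 0 < H ω)
    (q α : ℝ) (hq0 : 0 ≤ q) (hq1 : q < 1) (hα1 : q - 1 < α) (hα2 : α ≤ 0)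
    (hInt1 : Integrable H P)
    (hIntq : Integrable (fun ω => H ω ^ q) P)
    (hIntα : Integrable (fun ω => H ω ^ (1 + α)) P)
    (K : ℝ) (hK : 0 ≤ K)
    (I₁ : ℝ → ℝ) (hI₁meas : Measurable I₁)
    (hI₁ : ∀ z : ℝ, 0 < z → |I₁ z - z ^ (q - 1)| ≤ K * (1 + z ^ α))
    (lam₁ lam₂ : ℝ) (hlam₁ : 0 < lam₁) (hlam₂ : 0 < lam₂)
    (hbudget : (∫ ω, H ω * I₁ (lam₁ * H ω) ∂P) = lam₂ ^ (q - 1) * ∫ ω, H ω ^ q ∂P) :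
    (∫ ω, H ω * |I₁ (lam₁ * H ω) - (lam₂ * H ω) ^ (q - 1)| ∂P) ≤
      2 * ∫ ω, H ω * |I₁ (lam₁ * H ω) - (lam₁ * H ω) ^ (q - 1)| ∂P := by
  set D₁ : Ω → ℝ := fun ω => I₁ (lam₁ * H ω) - (lam₁ * H ω) ^ (q - 1) with hD₁def
  set c : ℝ := |lam₁ ^ (q - 1) - lam₂ ^ (q - 1)| with hcdef
  -- measurability
  have hHm : Measurable fun ω => lam₁ * H ω := measurable_const.mul hHmeas
  have hI₁m : Measurable fun ω => I₁ (lam₁ * H ω) := hI₁meas.comp hHm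
  have hg1m : Measurable fun ω => (lam₁ * H ω) ^ (q - 1) := by fun_prop
  have hxq : ∀ x : ℝ, 0 < x → x * x ^ (q - 1) = x ^ q := by
    intro x hx
    have h := Real.rpow_add hx 1 (q - 1)
    rw [Real.rpow_one] at h
    rw [← h]; norm_num
  have hD₁m : Measurable D₁ := hI₁m.sub hg1m
  -- dominating bound
  have hbound_int : Integrable (fun ω => K * H ω + K * lam₁ ^ α * H ω ^ (1 + α)) P :=
    (hInt1.const_mul K).add (hIntα.const_mul _)
  have hptD₁ : ∀ᵐ ω ∂P, H ω * |D₁ ω| ≤ K * H ω + K * lam₁ ^ α * H ω ^ (1 + α) := by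
    filter_upwards [hHpos] with ω hω
    have h1 : |I₁ (lam₁ * H ω) - (lam₁ * H ω) ^ (q - 1)| ≤ K * (1 + (lam₁ * H ω) ^ α) :=
      hI₁ _ (mul_pos hlam₁ hω)
    calc H ω * |D₁ ω| ≤ H ω * (K * (1 + (lam₁ * H ω) ^ α)) :=
          mul_le_mul_of_nonneg_left h1 hω.le
      _ = K * H ω + K * lam₁ ^ α * H ω ^ (1 + α) := by
          rw [Real.mul_rpow hlam₁.le hω.le, Real.rpow_add hω, Real.rpow_one]
          ring
  have hIntHD₁abs : Integrable (fun ω => H ω * |D₁ ω|) P := by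
    refine Integrable.mono' hbound_int ((hHmeas.mul hD₁m.abs).aestronglyMeasurable) ?_
    filter_upwards [hptD₁, hHpos] with ω h h2
    rw [Real.norm_eq_abs, abs_of_nonneg (by positivity)]
    exact h
  have hIntHD₁ : Integrable (fun ω => H ω * D₁ ω) P := by
    refine Integrable.mono' hbound_int ((hHmeas.mul hD₁m).aestronglyMeasurable) ?_
    filter_upwards [hptD₁, hHpos] with ω h h2
    rw [Real.norm_eq_abs, abs_mul, abs_of_pos h2]
    exact h
  -- H * (lam₁ H)^(q-1) = lam₁^(q-1) * H^q a.e.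
  have hg1eq : (fun ω => H ω * (lam₁ * H ω) ^ (q - 1)) =ᵐ[P]
      fun ω => lam₁ ^ (q - 1) * H ω ^ q := by
    filter_upwards [hHpos] with ω hω
    rw [Real.mul_rpow hlam₁.le hω.le, ← mul_assoc, mul_comm (H ω), mul_assoc,
      hxq (H ω) hω]
  have hIntg1 : Integrable (fun ω => H ω * (lam₁ * H ω) ^ (q - 1)) P :=
    ((hIntq.const_mul (lam₁ ^ (q - 1)))).congr hg1eq.symm
  have hintg1 : (∫ ω, H ω * (lam₁ * H ω) ^ (q - 1) ∂P)
      = lam₁ ^ (q - 1) * ∫ ω, H ω ^ q ∂P := by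
    rw [integral_congr_ae hg1eq, integral_const_mul]
  -- compute ∫ H * D₁
  have hintD₁ : (∫ ω, H ω * D₁ ω ∂P)
      = (lam₂ ^ (q - 1) - lam₁ ^ (q - 1)) * ∫ ω, H ω ^ q ∂P := by
    have hsplit : (fun ω => H ω * I₁ (lam₁ * H ω)) =
        fun ω => H ω * D₁ ω + H ω * (lam₁ * H ω) ^ (q - 1) := by
      funext ω; simp [hD₁def]; ring
    have := hbudget
    rw [hsplit, integral_add hIntHD₁ hIntg1, hintg1] at this
    linarith [this]
  have hHqnonneg : 0 ≤ ∫ ω, H ω ^ q ∂P := by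
    apply integral_nonneg_of_ae
    filter_upwards [hHpos] with ω hω
    positivity
  -- key estimate: c * ∫ H^q ≤ ∫ H |D₁|
  have hkey : c * (∫ ω, H ω ^ q ∂P) ≤ ∫ ω, H ω * |D₁ ω| ∂P := by
    have h1 : c * (∫ ω, H ω ^ q ∂P) = |∫ ω, H ω * D₁ ω ∂P| := by
      rw [hintD₁, abs_mul, abs_of_nonneg hHqnonneg, hcdef, abs_sub_comm]
    rw [h1]
    calc |∫ ω, H ω * D₁ ω ∂P| ≤ ∫ ω, |H ω| * |D₁ ω| ∂P := by
          simpa [Real.norm_eq_abs, abs_mul] using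
            norm_integral_le_integral_norm (fun ω => H ω * D₁ ω) (μ := P)
      _ = ∫ ω, H ω * |D₁ ω| ∂P := by
          apply integral_congr_ae
          filter_upwards [hHpos] with ω hω
          rw [abs_of_pos hω]
  -- pointwise triangle inequality
  have hptmain : ∀ᵐ ω ∂P, H ω * |I₁ (lam₁ * H ω) - (lam₂ * H ω) ^ (q - 1)|
      ≤ H ω * |D₁ ω| + c * H ω ^ q := by
    filter_upwards [hHpos] with ω hω
    have htri : |I₁ (lam₁ * H ω) - (lam₂ * H ω) ^ (q - 1)|
        ≤ |D₁ ω| + |(lam₁ * H ω) ^ (q - 1) - (lam₂ * H ω) ^ (q - 1)| := by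
      calc |I₁ (lam₁ * H ω) - (lam₂ * H ω) ^ (q - 1)|
          = |D₁ ω + ((lam₁ * H ω) ^ (q - 1) - (lam₂ * H ω) ^ (q - 1))| := by
            simp only [hD₁def]; ring_nf
        _ ≤ _ := abs_add_le _ _
    have hgdiff : H ω * |(lam₁ * H ω) ^ (q - 1) - (lam₂ * H ω) ^ (q - 1)|
        = c * H ω ^ q := by
      rw [Real.mul_rpow hlam₁.le hω.le, Real.mul_rpow hlam₂.le hω.le,
        ← sub_mul, abs_mul, abs_of_nonneg (Real.rpow_nonneg hω.le _)]
      rw [hcdef, mul_comm (H ω), mul_assoc, mul_comm (H ω ^ (q-1)) (H ω), hxq (H ω) hω]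
    calc H ω * |I₁ (lam₁ * H ω) - (lam₂ * H ω) ^ (q - 1)|
        ≤ H ω * (|D₁ ω| + |(lam₁ * H ω) ^ (q - 1) - (lam₂ * H ω) ^ (q - 1)|) :=
          mul_le_mul_of_nonneg_left htri hω.le
      _ = H ω * |D₁ ω| + H ω * |(lam₁ * H ω) ^ (q - 1) - (lam₂ * H ω) ^ (q - 1)| := by ring
      _ = H ω * |D₁ ω| + c * H ω ^ q := by rw [hgdiff]
  have hIntRHS : Integrable (fun ω => H ω * |D₁ ω| + c * H ω ^ q) P :=
    hIntHD₁abs.add (hIntq.const_mul c)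
  have hg2m : Measurable fun ω => (lam₂ * H ω) ^ (q - 1) := by fun_prop
  have hLHSm : Measurable fun ω => H ω * |I₁ (lam₁ * H ω) - (lam₂ * H ω) ^ (q - 1)| :=
    hHmeas.mul (hI₁m.sub hg2m).abs
  have hIntLHS : Integrable (fun ω => H ω * |I₁ (lam₁ * H ω) - (lam₂ * H ω) ^ (q - 1)|) P := by
    refine Integrable.mono' hIntRHS hLHSm.aestronglyMeasurable ?_
    filter_upwards [hptmain, hHpos] with ω h hω
    rw [Real.norm_eq_abs, abs_of_nonneg (by positivity)]
    exact h
  calc (∫ ω, H ω * |I₁ (lam₁ * H ω) - (lam₂ * H ω) ^ (q - 1)| ∂P)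
      ≤ ∫ ω, (H ω * |D₁ ω| + c * H ω ^ q) ∂P :=
        integral_mono_ae hIntLHS hIntRHS hptmain
    _ = (∫ ω, H ω * |D₁ ω| ∂P) + c * ∫ ω, H ω ^ q ∂P := by
        rw [integral_add hIntHD₁abs (hIntq.const_mul c), integral_const_mul]
    _ ≤ (∫ ω, H ω * |D₁ ω| ∂P) + ∫ ω, H ω * |D₁ ω| ∂P := by linarith [hkey]
    _ = 2 * ∫ ω, H ω * |D₁ ω| ∂P := by ring
end

section
/- Let U₁, U₂ : (0,∞) → ℝ be differentiable functions whose derivatives U₁′, U₂′ map (0,∞) bijectively onto (0,∞) and are strictly decreasing, and let I₁, I₂ : (0,∞) → (0,∞) denote the inverse functions of U₁′, U₂′ respectively. Suppose f, f̃ : (0,∞) → [0,∞) satisfy U₁′(x + f(x)) ≤ U₂′(x) ≤ U₁′(x + f̃(x)) for all x > 0. Then for all z > 0: |I₁(z) − I₂(z)| ≤ max{f(I₂(z)), f̃(I₂(z))}. -/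
/-- Lemma 3.6 (i): if `U₁'(x + f(x)) ≤ U₂'(x) ≤ U₁'(x + f̃(x))` for all `x > 0`, then the
inverse marginal utilities satisfy `|I₁(z) - I₂(z)| ≤ max{f(I₂(z)), f̃(I₂(z))}`. -/
theorem inverse_marginal_comparison
    (U₁ U₂ U₁' U₂' I₁ I₂ : ℝ → ℝ)
    (hU₁d : ∀ x : ℝ, 0 < x → HasDerivAt U₁ (U₁' x) x)
    (hU₂d : ∀ x : ℝ, 0 < x → HasDerivAt U₂ (U₂' x) x)
    (hU₁pos : ∀ x : ℝ, 0 < x → 0 < U₁' x)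
    (hU₂pos : ∀ x : ℝ, 0 < x → 0 < U₂' x)
    (hU₁anti : ∀ x y : ℝ, 0 < x → x < y → U₁' y < U₁' x)
    (hU₂anti : ∀ x y : ℝ, 0 < x → x < y → U₂' y < U₂' x)
    (hU₁surj : ∀ z : ℝ, 0 < z → ∃ x : ℝ, 0 < x ∧ U₁' x = z)
    (hU₂surj : ∀ z : ℝ, 0 < z → ∃ x : ℝ, 0 < x ∧ U₂' x = z)
    (hI₁ : ∀ z : ℝ, 0 < z → 0 < I₁ z ∧ U₁' (I₁ z) = z)
    (hI₂ : ∀ z : ℝ, 0 < z → 0 < I₂ z ∧ U₂' (I₂ z) = z)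
    (f ftil : ℝ → ℝ)
    (hf : ∀ x : ℝ, 0 < x → 0 ≤ f x) (hftil : ∀ x : ℝ, 0 < x → 0 ≤ ftil x)
    (hsandwich : ∀ x : ℝ, 0 < x → U₁' (x + f x) ≤ U₂' x ∧ U₂' x ≤ U₁' (x + ftil x)) :
    ∀ z : ℝ, 0 < z → |I₁ z - I₂ z| ≤ max (f (I₂ z)) (ftil (I₂ z)) := by
  intro z hz
  obtain ⟨hI₁pos, hI₁eq⟩ := hI₁ z hz
  obtain ⟨hI₂pos, hI₂eq⟩ := hI₂ z hz
  set y := I₂ z with hy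
  obtain ⟨h1, h2⟩ := hsandwich y hI₂pos
  rw [hI₂eq] at h1 h2
  have hkey : ∀ a b : ℝ, 0 < a → 0 < b → U₁' a ≤ U₁' b → b ≤ a := by
    intro a b ha hb hab
    by_contra h
    exact absurd hab (not_le.mpr (hU₁anti a b ha (not_le.mp h)))
  have hup : I₁ z ≤ y + f y := by
    apply hkey _ _ (by linarith [hf y hI₂pos]) hI₁pos
    rw [hI₁eq]; exact h1
  have hlo : y + ftil y ≤ I₁ z := by
    apply hkey _ _ hI₁pos (by linarith [hftil y hI₂pos])
    rw [hI₁eq]; exact h2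
  have h0 : 0 ≤ I₁ z - y := by linarith [hftil y hI₂pos]
  rw [abs_of_nonneg h0]
  exact le_max_of_le_left (by linarith)
end

section
/- Let U₁, U₂ : (0,∞) → ℝ be twice differentiable functions with U_i′(x) > 0 and U_i″(x) < 0 for all x > 0, such that U₁′, U₂′ map (0,∞) bijectively onto (0,∞), with inverse functions I₁, I₂ : (0,∞) → (0,∞) that are differentiable and satisfy I_i′(z) = 1/U_i″(I_i(z)) for all z > 0. Suppose f, f̃ : (0,∞) → [0,∞) satisfy U₁′(x + f(x)) ≤ U₂′(x) ≤ U₁′(x + f̃(x)) for all x > 0, that g : (0,∞) → ℝ satisfies |ART₁(x) − ART₂(x)| ≤ g(x) for all x > 0 where ART_i(x) := −U_i′(x)/U_i″(x), and that there exist constants a, b ∈ ℝ with ART₂(x) = a·x + b for all x > 0. Then for all z > 0: |z·I₁′(z) − z·I₂′(z)| ≤ g(I₁(z)) + |a|·max{f(I₂(z)), f̃(I₂(z))}. -/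
/-- Lemma 3.6 (ii): under the sandwich condition, a bound `g` on the difference of the
Arrow–Pratt absolute risk tolerances, and `ART₂(x) = a x + b` (HARA benchmark), one has
`|z I₁'(z) - z I₂'(z)| ≤ g(I₁(z)) + |a| max{f(I₂(z)), f̃(I₂(z))}`. -/
theorem risk_tolerance_comparison
    (U₁ U₂ U₁' U₂' U₁'' U₂'' I₁ I₂ I₁' I₂' : ℝ → ℝ)
    (hU₁d : ∀ x : ℝ, 0 < x → HasDerivAt U₁ (U₁' x) x)
    (hU₂d : ∀ x : ℝ, 0 < x → HasDerivAt U₂ (U₂' x) x)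
    (hU₁dd : ∀ x : ℝ, 0 < x → HasDerivAt U₁' (U₁'' x) x)
    (hU₂dd : ∀ x : ℝ, 0 < x → HasDerivAt U₂' (U₂'' x) x)
    (hU₁pos : ∀ x : ℝ, 0 < x → 0 < U₁' x)
    (hU₂pos : ∀ x : ℝ, 0 < x → 0 < U₂' x)
    (hU₁neg : ∀ x : ℝ, 0 < x → U₁'' x < 0)
    (hU₂neg : ∀ x : ℝ, 0 < x → U₂'' x < 0)
    (hU₁surj : ∀ z : ℝ, 0 < z → ∃ x : ℝ, 0 < x ∧ U₁' x = z)
    (hU₂surj : ∀ z : ℝ, 0 < z → ∃ x : ℝ, 0 < x ∧ U₂' x = z)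
    (hU₁inj : ∀ x y : ℝ, 0 < x → 0 < y → U₁' x = U₁' y → x = y)
    (hU₂inj : ∀ x y : ℝ, 0 < x → 0 < y → U₂' x = U₂' y → x = y)
    (hI₁ : ∀ z : ℝ, 0 < z → 0 < I₁ z ∧ U₁' (I₁ z) = z)
    (hI₂ : ∀ z : ℝ, 0 < z → 0 < I₂ z ∧ U₂' (I₂ z) = z)
    (hI₁d : ∀ z : ℝ, 0 < z → HasDerivAt I₁ (I₁' z) z ∧ I₁' z = 1 / U₁'' (I₁ z))
    (hI₂d : ∀ z : ℝ, 0 < z → HasDerivAt I₂ (I₂' z) z ∧ I₂' z = 1 / U₂'' (I₂ z))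
    (f ftil : ℝ → ℝ)
    (hf : ∀ x : ℝ, 0 < x → 0 ≤ f x) (hftil : ∀ x : ℝ, 0 < x → 0 ≤ ftil x)
    (hsandwich : ∀ x : ℝ, 0 < x → U₁' (x + f x) ≤ U₂' x ∧ U₂' x ≤ U₁' (x + ftil x))
    (g : ℝ → ℝ)
    (hg : ∀ x : ℝ, 0 < x → |(-(U₁' x / U₁'' x)) - (-(U₂' x / U₂'' x))| ≤ g x)
    (a b : ℝ) (hHARA : ∀ x : ℝ, 0 < x → -(U₂' x / U₂'' x) = a * x + b) :
    ∀ z : ℝ, 0 < z →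
      |z * I₁' z - z * I₂' z| ≤ g (I₁ z) + |a| * max (f (I₂ z)) (ftil (I₂ z)) := by

  intro z hz
  obtain ⟨hI₁pos, hI₁eq⟩ := hI₁ z hz
  obtain ⟨hI₂pos, hI₂eq⟩ := hI₂ z hz
  obtain ⟨-, hI₁'⟩ := hI₁d z hz
  obtain ⟨-, hI₂'⟩ := hI₂d z hz
  have hfI₂ := hf (I₂ z) hI₂pos
  have hftilI₂ := hftil (I₂ z) hI₂pos
  have hanti : StrictAntiOn U₁' (Set.Ioi 0) := by
    apply strictAntiOn_of_deriv_neg (convex_Ioi 0)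
    · intro x hx; exact ((hU₁dd x hx).continuousAt).continuousWithinAt
    · intro x hx
      rw [interior_Ioi] at hx
      rw [(hU₁dd x hx).deriv]
      exact hU₁neg x hx
  have hs := hsandwich (I₂ z) hI₂pos
  rw [hI₂eq] at hs
  have h1 : I₁ z ≤ I₂ z + f (I₂ z) := by
    by_contra h
    push_neg at h
    have := hanti (Set.mem_Ioi.2 (by linarith)) (Set.mem_Ioi.2 hI₁pos) h
    rw [hI₁eq] at this
    linarith [hs.1]
  have h2 : I₂ z + ftil (I₂ z) ≤ I₁ z := by
    by_contra h
    push_neg at h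
    have := hanti (Set.mem_Ioi.2 hI₁pos) (Set.mem_Ioi.2 (by linarith)) h
    rw [hI₁eq] at this
    linarith [hs.2]
  have hU₁''ne : U₁'' (I₁ z) ≠ 0 := (hU₁neg _ hI₁pos).ne
  have hU₂''ne : U₂'' (I₂ z) ≠ 0 := (hU₂neg _ hI₂pos).ne
  have e1 : z * I₁' z = U₁' (I₁ z) / U₁'' (I₁ z) := by
    rw [hI₁', mul_one_div, hI₁eq]
  have e2 : z * I₂' z = U₂' (I₂ z) / U₂'' (I₂ z) := by
    rw [hI₂', mul_one_div, hI₂eq]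
  have key : z * I₁' z - z * I₂' z
      = ((-(U₂' (I₁ z) / U₂'' (I₁ z))) - (-(U₁' (I₁ z) / U₁'' (I₁ z))))
        + a * (I₂ z - I₁ z) := by
    have hh1 := hHARA (I₁ z) hI₁pos
    have hh2 := hHARA (I₂ z) hI₂pos
    rw [e1, e2]
    linear_combination hh2 - hh1
  rw [key]
  have t1 : |(-(U₂' (I₁ z) / U₂'' (I₁ z))) - (-(U₁' (I₁ z) / U₁'' (I₁ z)))| ≤ g (I₁ z) := by
    rw [abs_sub_comm]; exact hg _ hI₁pos
  have t2 : |a * (I₂ z - I₁ z)| ≤ |a| * max (f (I₂ z)) (ftil (I₂ z)) := by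
    rw [abs_mul]
    refine mul_le_mul_of_nonneg_left ?_ (abs_nonneg a)
    rw [abs_sub_comm, abs_of_nonneg (by linarith)]
    calc I₁ z - I₂ z ≤ f (I₂ z) := by linarith
      _ ≤ max (f (I₂ z)) (ftil (I₂ z)) := le_max_left _ _
  calc |((-(U₂' (I₁ z) / U₂'' (I₁ z))) - (-(U₁' (I₁ z) / U₁'' (I₁ z)))) + a * (I₂ z - I₁ z)|
      ≤ |(-(U₂' (I₁ z) / U₂'' (I₁ z))) - (-(U₁' (I₁ z) / U₁'' (I₁ z)))| + |a * (I₂ z - I₁ z)| :=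
        abs_add_le _ _
    _ ≤ g (I₁ z) + |a| * max (f (I₂ z)) (ftil (I₂ z)) := add_le_add t1 t2
end

section
/- Let n ≥ 2, let p₁ < p₂ < ⋯ < pₙ < 0 be reals and w₁, …, wₙ > 0. Define φ(x) := Σ_{i=1}^n w_i·x^{p_i−1} for x > 0 (so φ is a strictly decreasing bijection of (0,∞) onto (0,∞)), let I₁ : (0,∞) → (0,∞) be its inverse (φ(I₁(z)) = z for all z > 0), and let I₂(z) := (z/wₙ)^{1/(pₙ−1)}. Then for every β ∈ [0,1) with β > 1 + p_{n−1} − pₙ, there exists K > 0 such that for all z > 0: |I₁(z) − I₂(z)| ≤ K·(1 + z^{β/(pₙ−1)}). -/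
/-!
Write `x = I₁(z)` and `s = pₙ - 1 ≤ -1`. Splitting off the top term, `z / wₙ = x ^ s + r` with
`r = wₙ⁻¹ Σ_{i<n} wᵢ x^{pᵢ-1} ≥ 0`, so `I₂(z) = (x ^ s + r) ^ (1/s) ≤ x`. For `x ≤ 1` the
difference is at most `1`. For `x > 1`, the Bernoulli-type bound `1 - (1 + u)^{1/s} ≤ u` gives
`x - I₂(z) ≤ r x^{1-s}`, and `r ≤ c x^{p_{n-1}-1}` because the remaining exponents are at most
`p_{n-1} - 1`. Hence `x - I₂(z) ≤ c x^{1 + p_{n-1} - pₙ} ≤ c x^β`, and `x^β ≤ (z / Σ wᵢ)^{β/s}`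
since `z ≤ (Σ wᵢ) x^s` when `x ≥ 1`.
-/

open Finset Real

lemma one_sub_rpow_one_div_le {u s : ℝ} (hu : 0 ≤ u) (hs : s ≤ -1) :
    1 - (1 + u) ^ (1 / s) ≤ u := by
  -- with `v = (1 + u) ^ (1 / s) ∈ (0, 1]`: `1 - v ≤ v⁻¹ - 1 ≤ v ^ s - 1 = u`
  set v := (1 + u) ^ (1 / s)
  have hv0 : 0 < v := by positivity
  have hv1 : v ≤ 1 := rpow_le_one_of_one_le_of_nonpos (by linarith)
    (div_nonpos_of_nonneg_of_nonpos zero_le_one (by linarith))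
  have hvs : v ^ s = 1 + u := by
    rw [← rpow_mul (by linarith), one_div_mul_cancel (by linarith), rpow_one]
  have hinv : v⁻¹ ≤ 1 + u := by
    rw [← hvs, ← rpow_neg_one]
    exact rpow_le_rpow_of_exponent_ge hv0 hv1 hs
  have hamgm : 1 - v ≤ v⁻¹ - 1 := by
    have : v * v⁻¹ = 1 := mul_inv_cancel₀ hv0.ne'
    nlinarith [sq_nonneg (v - 1), inv_pos.2 hv0]
  linarith

lemma rpow_one_div_le_of_rpow_le {x y s : ℝ} (hx : 0 < x) (hs : s < 0) (h : x ^ s ≤ y) :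
    y ^ (1 / s) ≤ x :=
  calc y ^ (1 / s) ≤ (x ^ s) ^ (1 / s) :=
        rpow_le_rpow_of_nonpos (by positivity) h (div_nonpos_of_nonneg_of_nonpos zero_le_one hs.le)
    _ = x := by rw [← rpow_mul hx.le, mul_one_div_cancel hs.ne, rpow_one]

lemma sub_rpow_add_one_div_le {x r s : ℝ} (hx : 0 < x) (hr : 0 ≤ r) (hs : s ≤ -1) :
    x - (x ^ s + r) ^ (1 / s) ≤ r * x ^ (1 - s) := by
  have hsplit : x ^ s + r = x ^ s * (1 + r * x ^ (-s)) := by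
    rw [rpow_neg hx.le]
    field_simp
  have hroot : (x ^ s) ^ (1 / s) = x := by
    rw [← rpow_mul hx.le, mul_one_div_cancel (by linarith), rpow_one]
  calc x - (x ^ s + r) ^ (1 / s) = x * (1 - (1 + r * x ^ (-s)) ^ (1 / s)) := by
        rw [hsplit, mul_rpow (by positivity) (by positivity), hroot]
        ring
    _ ≤ x * (r * x ^ (-s)) :=
        mul_le_mul_of_nonneg_left (one_sub_rpow_one_div_le (by positivity) hs) hx.le
    _ = r * x ^ (1 - s) := by
        rw [rpow_sub hx, rpow_neg hx.le, rpow_one]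
        ring

lemma sum_mul_rpow_le_of_exponent_le {ι : Type*} (t : Finset ι) {w e : ι → ℝ} {x a : ℝ}
    (hw : ∀ i ∈ t, 0 ≤ w i) (hx : 1 ≤ x) (he : ∀ i ∈ t, e i ≤ a) :
    ∑ i ∈ t, w i * x ^ e i ≤ (∑ i ∈ t, w i) * x ^ a := by
  rw [sum_mul]
  exact sum_le_sum fun i hi =>
    mul_le_mul_of_nonneg_left (rpow_le_rpow_of_exponent_le hx (he i hi)) (hw i hi)

lemma rpow_le_rpow_div_of_le_rpow {x y s β : ℝ} (hx : 0 < x) (hy : 0 < y) (hs : s < 0)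
    (hβ : 0 ≤ β) (h : y ≤ x ^ s) : x ^ β ≤ y ^ (β / s) :=
  calc x ^ β = (x ^ s) ^ (β / s) := by rw [← rpow_mul hx.le, mul_div_cancel₀ _ hs.ne]
    _ ≤ y ^ (β / s) := rpow_le_rpow_of_nonpos hy h (div_nonpos_of_nonneg_of_nonpos hβ hs.le)

section
variable {ι : Type*} [Fintype ι] [DecidableEq ι] {w e : ι → ℝ} {N : ι} {x : ℝ}

lemma sum_mul_rpow_div_eq_rpow_add (hw : w N ≠ 0) :
    (∑ i, w i * x ^ e i) / w N = x ^ e N + (∑ i ∈ univ.erase N, w i * x ^ e i) / w N := by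
  rw [← add_sum_erase _ _ (mem_univ N), add_div, mul_div_cancel_left₀ _ hw]

lemma rpow_one_div_sum_mul_rpow_div_le (hw : ∀ i, 0 < w i) (hx : 0 < x) (hN : e N < 0) :
    ((∑ i, w i * x ^ e i) / w N) ^ (1 / e N) ≤ x := by
  refine rpow_one_div_le_of_rpow_le hx hN ?_
  rw [sum_mul_rpow_div_eq_rpow_add (hw N).ne', le_add_iff_nonneg_right]
  exact div_nonneg (sum_nonneg fun i _ => mul_nonneg (hw i).le (rpow_nonneg hx.le _)) (hw N).le

lemma sub_rpow_one_div_sum_mul_rpow_div_le {a : ℝ} (hw : ∀ i, 0 < w i) (hx : 1 ≤ x)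
    (hN : e N ≤ -1) (he : ∀ i ≠ N, e i ≤ a) :
    x - ((∑ i, w i * x ^ e i) / w N) ^ (1 / e N) ≤
      (∑ i ∈ univ.erase N, w i) / w N * x ^ (1 + a - e N) := by
  have hx0 : 0 < x := by linarith
  have htail : ∑ i ∈ univ.erase N, w i * x ^ e i ≤ (∑ i ∈ univ.erase N, w i) * x ^ a :=
    sum_mul_rpow_le_of_exponent_le _ (fun i _ => (hw i).le) hx
      fun i hi => he i (ne_of_mem_erase hi)
  rw [sum_mul_rpow_div_eq_rpow_add (hw N).ne']
  have hr : 0 ≤ (∑ i ∈ univ.erase N, w i * x ^ e i) / w N :=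
    div_nonneg (sum_nonneg fun i _ => mul_nonneg (hw i).le (rpow_nonneg hx0.le _)) (hw N).le
  calc _ ≤ (∑ i ∈ univ.erase N, w i * x ^ e i) / w N * x ^ (1 - e N) :=
        sub_rpow_add_one_div_le hx0 hr hN
    _ ≤ (∑ i ∈ univ.erase N, w i) * x ^ a / w N * x ^ (1 - e N) := by
        gcongr
        exact (hw N).le
    _ = _ := by rw [show 1 + a - e N = a + (1 - e N) by ring, rpow_add hx0]; ring

lemma sub_rpow_one_div_sum_mul_rpow_div_le_rpow {a β : ℝ} (hw : ∀ i, 0 < w i) (hx : 1 ≤ x)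
    (hmax : ∀ i, e i ≤ e N) (hN : e N ≤ -1) (he : ∀ i ≠ N, e i ≤ a) (hβ0 : 0 ≤ β)
    (hβ : 1 + a - e N ≤ β) :
    x - ((∑ i, w i * x ^ e i) / w N) ^ (1 / e N) ≤
      (∑ i ∈ univ.erase N, w i) / w N / (∑ i, w i) ^ (β / e N) *
        (∑ i, w i * x ^ e i) ^ (β / e N) := by
  have hx0 : 0 < x := by linarith
  have hW : 0 < ∑ i, w i := sum_pos (fun i _ => hw i) ⟨N, mem_univ N⟩
  have hz : 0 < ∑ i, w i * x ^ e i :=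
    sum_pos (fun i _ => mul_pos (hw i) (rpow_pos_of_pos hx0 _)) ⟨N, mem_univ N⟩
  have hzW : (∑ i, w i * x ^ e i) / ∑ i, w i ≤ x ^ e N :=
    (div_le_iff₀' hW).2 <| sum_mul_rpow_le_of_exponent_le _ (fun i _ => (hw i).le) hx
      fun i _ => hmax i
  have hc : 0 ≤ (∑ i ∈ univ.erase N, w i) / w N :=
    div_nonneg (sum_nonneg fun i _ => (hw i).le) (hw N).le
  calc _ ≤ (∑ i ∈ univ.erase N, w i) / w N * x ^ (1 + a - e N) :=
        sub_rpow_one_div_sum_mul_rpow_div_le hw hx hN he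
    _ ≤ (∑ i ∈ univ.erase N, w i) / w N * x ^ β :=
        mul_le_mul_of_nonneg_left (rpow_le_rpow_of_exponent_le hx hβ) hc
    _ ≤ (∑ i ∈ univ.erase N, w i) / w N * ((∑ i, w i * x ^ e i) / ∑ i, w i) ^ (β / e N) :=
        mul_le_mul_of_nonneg_left
          (rpow_le_rpow_div_of_le_rpow hx0 (div_pos hz hW) (by linarith) hβ0 hzW) hc
    _ = _ := by rw [div_rpow hz.le hW.le]; ring

lemma abs_sub_rpow_one_div_sum_mul_rpow_div_le {a β : ℝ} (hw : ∀ i, 0 < w i) (hx : 0 < x)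
    (hmax : ∀ i, e i ≤ e N) (hN : e N ≤ -1) (he : ∀ i ≠ N, e i ≤ a) (hβ0 : 0 ≤ β)
    (hβ : 1 + a - e N ≤ β) :
    |x - ((∑ i, w i * x ^ e i) / w N) ^ (1 / e N)| ≤
      (1 + (∑ i ∈ univ.erase N, w i) / w N / (∑ i, w i) ^ (β / e N)) *
        (1 + (∑ i, w i * x ^ e i) ^ (β / e N)) := by
  have hC : 0 ≤ (∑ i ∈ univ.erase N, w i) / w N / (∑ i, w i) ^ (β / e N) :=
    div_nonneg (div_nonneg (sum_nonneg fun i _ => (hw i).le) (hw N).le)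
      (rpow_nonneg (sum_nonneg fun i _ => (hw i).le) _)
  have hz : 0 ≤ (∑ i, w i * x ^ e i) ^ (β / e N) :=
    rpow_nonneg (sum_nonneg fun i _ => mul_nonneg (hw i).le (rpow_nonneg hx.le _)) _
  have hI₂ : 0 ≤ ((∑ i, w i * x ^ e i) / w N) ^ (1 / e N) :=
    rpow_nonneg (div_nonneg (sum_nonneg fun i _ => mul_nonneg (hw i).le (rpow_nonneg hx.le _))
      (hw N).le) _
  rw [abs_of_nonneg (sub_nonneg.2 (rpow_one_div_sum_mul_rpow_div_le hw hx (by linarith)))]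
  rcases le_or_gt x 1 with hx1 | hx1
  · nlinarith
  · nlinarith [sub_rpow_one_div_sum_mul_rpow_div_le_rpow hw hx1.le hmax hN he hβ0 hβ]

end

/-- Proposition 2.13, inequality (1): the inverse `I₁` of `φ(x) = Σ wᵢ x^{pᵢ-1}` satisfies
`|I₁(z) - (z/wₙ)^{1/(pₙ-1)}| ≤ K(1 + z^{β/(pₙ-1)})` for any
`β ∈ [0,1)` with `β > 1 + p_{n-1} - pₙ`. -/
theorem linear_sharing_inverse_marginal_bound
    (n : ℕ) (hn : 2 ≤ n)
    (p : Fin n → ℝ) (hpmono : StrictMono p) (hpneg : ∀ i, p i < 0)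
    (w : Fin n → ℝ) (hw : ∀ i, 0 < w i)
    (I₁ : ℝ → ℝ)
    (hI₁ : ∀ z : ℝ, 0 < z → 0 < I₁ z ∧ (∑ i, w i * I₁ z ^ (p i - 1)) = z)
    (β : ℝ) (hβ0 : 0 ≤ β)
    (hβ2 : 1 + p ⟨n - 2, by omega⟩ - p ⟨n - 1, by omega⟩ < β) :
    ∃ K : ℝ, 0 < K ∧ ∀ z : ℝ, 0 < z →
      |I₁ z - (z / w ⟨n - 1, by omega⟩) ^ (1 / (p ⟨n - 1, by omega⟩ - 1))| ≤
        K * (1 + z ^ (β / (p ⟨n - 1, by omega⟩ - 1))) := by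
  set N : Fin n := ⟨n - 1, by omega⟩
  set M : Fin n := ⟨n - 2, by omega⟩
  have hmax : ∀ i, p i - 1 ≤ p N - 1 := fun i => by
    have : i ≤ N := Fin.le_iff_val_le_val.2 (by simp only [N]; omega)
    linarith [hpmono.monotone this]
  have he : ∀ i ≠ N, p i - 1 ≤ p M - 1 := fun i hi => by
    have : (i : ℕ) ≠ n - 1 := fun h => hi (Fin.ext h)
    have : i ≤ M := Fin.le_iff_val_le_val.2 (by simp only [M]; omega)
    linarith [hpmono.monotone this]
  set C := (∑ i ∈ univ.erase N, w i) / w N / (∑ i, w i) ^ (β / (p N - 1))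
  have hC : 0 ≤ C := div_nonneg (div_nonneg (sum_nonneg fun i _ => (hw i).le) (hw N).le)
    (rpow_nonneg (sum_nonneg fun i _ => (hw i).le) _)
  refine ⟨1 + C, by linarith, fun z hz => ?_⟩
  obtain ⟨hx, hφ⟩ := hI₁ z hz
  simpa only [hφ] using abs_sub_rpow_one_div_sum_mul_rpow_div_le (e := fun i => p i - 1) hw hx
    hmax (by linarith [hpneg N]) he hβ0 (by linarith)
end

section
/- Let n ≥ 1, let p₁, …, pₙ < 0 be reals, β₁, …, βₙ > 0, and z > 0. Set x̂_i := (z/β_i)^{1/(p_i−1)} for i = 1, …, n and x := Σ_{i=1}^n x̂_i. Then for every y₁, …, yₙ > 0 with Σ_{i=1}^n y_i = x: Σ_{i=1}^n β_i·y_i^{p_i}/p_i ≤ Σ_{i=1}^n β_i·x̂_i^{p_i}/p_i. -/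
/-- Bernoulli's inequality for negative real exponents. -/
lemma bernoulli_neg {p t : ℝ} (hp : p < 0) (ht : 0 < t) :
    1 + p * (t - 1) ≤ t ^ p := by
  have h1 : Real.log t ≤ t - 1 := Real.log_le_sub_one_of_pos ht
  have h2 : p * Real.log t + 1 ≤ Real.exp (p * Real.log t) :=
    Real.add_one_le_exp _
  have h3 : t ^ p = Real.exp (p * Real.log t) := by
    rw [Real.rpow_def_of_pos ht, mul_comm]
  nlinarith

/-- Attainment statement underlying Lemma 2.12: the Pareto-optimal allocation
`x̂ᵢ = (z/βᵢ)^{1/(pᵢ-1)}` maximizes `Σ βᵢ yᵢ^{pᵢ}/pᵢ` over positive allocations `y`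
with `Σ yᵢ = Σ x̂ᵢ`. -/
theorem pareto_optimal_allocation
    (n : ℕ) (hn : 1 ≤ n)
    (p : Fin n → ℝ) (hp : ∀ i, p i < 0)
    (β : Fin n → ℝ) (hβ : ∀ i, 0 < β i)
    (z : ℝ) (hz : 0 < z)
    (xhat : Fin n → ℝ) (hxhat : ∀ i, xhat i = (z / β i) ^ (1 / (p i - 1)))
    (y : Fin n → ℝ) (hy : ∀ i, 0 < y i)
    (hsum : ∑ i, y i = ∑ i, xhat i) :
    (∑ i, β i * y i ^ p i / p i) ≤ ∑ i, β i * xhat i ^ p i / p i := by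
  have key : ∀ i, β i * y i ^ p i / p i ≤
      β i * xhat i ^ p i / p i + z * (y i - xhat i) := by
    intro i
    have hpi := hp i
    have hβi := hβ i
    have hyi := hy i
    have hzb : 0 < z / β i := div_pos hz hβi
    have hxi : 0 < xhat i := by rw [hxhat i]; positivity
    have hp1 : p i - 1 ≠ 0 := by linarith
    -- xhat i ^ (p i - 1) = z / β i
    have hpow : xhat i ^ (p i - 1) = z / β i := by
      rw [hxhat i, ← Real.rpow_mul hzb.le, one_div_mul_cancel hp1, Real.rpow_one]
    -- Bernoulli applied at t = y i / xhat i
    have hb := bernoulli_neg hpi (div_pos hyi hxi)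
    have hA : 0 < xhat i ^ p i := Real.rpow_pos_of_pos hxi _
    have hdiv : (y i / xhat i) ^ p i = y i ^ p i / xhat i ^ p i :=
      Real.div_rpow hyi.le hxi.le _
    rw [hdiv] at hb
    -- multiply by xhat i ^ p i
    have hb2 : xhat i ^ p i + p i * xhat i ^ (p i - 1) * (y i - xhat i) ≤ y i ^ p i := by
      have hsub : xhat i ^ (p i - 1) = xhat i ^ p i / xhat i := by
        rw [Real.rpow_sub hxi, Real.rpow_one]
      rw [hsub]
      have hm := mul_le_mul_of_nonneg_right hb hA.le
      rw [div_mul_cancel₀ _ hA.ne'] at hm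
      have he : xhat i ^ p i / xhat i * (y i - xhat i)
          = xhat i ^ p i * (y i / xhat i - 1) := by
        field_simp
      nlinarith [hm, he]
    -- divide by p i (negative) and multiply by β i
    have hzeq : β i * xhat i ^ (p i - 1) = z := by
      rw [hpow]; field_simp
    have h5 : β i * xhat i ^ p i + p i * z * (y i - xhat i) ≤ β i * y i ^ p i := by
      rw [← hzeq]
      nlinarith [mul_le_mul_of_nonneg_left hb2 hβi.le]
    rw [div_le_iff_of_neg hpi]
    have hc : β i * xhat i ^ p i / p i * p i = β i * xhat i ^ p i :=
      div_mul_cancel₀ _ hpi.ne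
    nlinarith
  calc ∑ i, β i * y i ^ p i / p i
      ≤ ∑ i, (β i * xhat i ^ p i / p i + z * (y i - xhat i)) :=
        Finset.sum_le_sum fun i _ => key i
    _ = (∑ i, β i * xhat i ^ p i / p i) + z * ((∑ i, y i) - ∑ i, xhat i) := by
        rw [Finset.sum_add_distrib, ← Finset.mul_sum, Finset.sum_sub_distrib]
    _ = ∑ i, β i * xhat i ^ p i / p i := by rw [hsum]; ring
end
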